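/- arXiv:2405.11418 — 5 statements merged into one kernel-verified Lean document; each statement's English description precedes it below -/
import Mathlib

section
/- Completeness of CL_AB: every valid formula of Φ_CL_AB is derivable in the axiomatic system for CL_AB, i.e., for every φ ∈ Φ_CL_AB, if ⊨ φ then ⊢_CL_AB φ. -/
open scoped Classical

/-- Graph-inclusion between joint actions (represented as partial functions). -/
def subJA {Agt Act : Type} (σ σ' : Agt → Option Act) : Prop :=
  ∀ a x, σ a = some x → σ' a = some x

/-- Restriction of a joint action to a coalition. -/
noncomputable def restrictJA {Agt Act : Type} (σ : Agt → Option Act) (B : Set Agt) :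
    Agt → Option Act :=
  fun a => if a ∈ B then σ a else none

/-- σ_A ⊎ σ_B : keep σ_A on A and σ_B on B − A. -/
noncomputable def uplusJA {Agt Act : Type} (A B : Set Agt) (σA σB : Agt → Option Act) :
    Agt → Option Act :=
  fun a => if a ∈ A then σA a else if a ∈ B then σB a else none

/-- Concurrent game models over agents `Agt` and atomic propositions `AP`.
A joint action of a coalition `A` is represented as a function `Agt → Option Act`
whose domain (the set of agents where it is `some`) is exactly `A`. -/
structure CGM (Agt AP : Type) where
  St : Type
  Act : Type
  st_ne : Nonempty St
  act_ne : Nonempty Act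
  aja : St → Set Agt → Set (Agt → Option Act)
  out : St → (Agt → Option Act) → Set St
  lab : St → Set AP
  aja_ne : ∀ s A, (aja s A).Nonempty
  aja_dom : ∀ s A, ∀ σ ∈ aja s A, ∀ a, (σ a).isSome ↔ a ∈ A
  aja_glue : ∀ s A (σ : Agt → Option Act), A.Nonempty →
      (∀ a, (σ a).isSome ↔ a ∈ A) →
      (σ ∈ aja s A ↔ ∀ a ∈ A, restrictJA σ {a} ∈ aja s {a})
  out_univ : ∀ s, ∀ σ ∈ aja s Set.univ, ∃ t, out s σ = {t}
  out_univ_not : ∀ s (σ : Agt → Option Act), (∀ a, (σ a).isSome) →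
      σ ∉ aja s Set.univ → out s σ = ∅
  out_glue : ∀ s A, A ≠ Set.univ → ∀ σ ∈ aja s A,
      out s σ = {t | ∃ σ' ∈ aja s Set.univ, subJA σ σ' ∧ t ∈ out s σ'}
  out_not : ∀ s A (σ : Agt → Option Act), (∀ a, (σ a).isSome ↔ a ∈ A) →
      A ≠ Set.univ → σ ∉ aja s A → out s σ = ∅

/-- The ability fragment Φ_CL_AB. -/
inductive FormAB (Agt AP : Type) : Type
  | top : FormAB Agt AP
  | bot : FormAB Agt AP
  | atom : AP → FormAB Agt AP
  | natom : AP → FormAB Agt AP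
  | and : FormAB Agt AP → FormAB Agt AP → FormAB Agt AP
  | or : FormAB Agt AP → FormAB Agt AP → FormAB Agt AP
  | dia : Set Agt → FormAB Agt AP → FormAB Agt AP

/-- Satisfaction for Φ_CL_AB. -/
def satAB {Agt AP : Type} (M : CGM Agt AP) : M.St → FormAB Agt AP → Prop
  | _, FormAB.top => True
  | _, FormAB.bot => False
  | s, FormAB.atom p => p ∈ M.lab s
  | s, FormAB.natom p => p ∉ M.lab s
  | s, FormAB.and φ ψ => satAB M s φ ∧ satAB M s ψ
  | s, FormAB.or φ ψ => satAB M s φ ∨ satAB M s ψ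
  | s, FormAB.dia A φ => ∃ σ ∈ M.aja s A, ∀ t ∈ M.out s σ, satAB M t φ

/-- Validity for Φ_CL_AB. -/
def validAB {Agt AP : Type} (φ : FormAB Agt AP) : Prop :=
  ∀ (M : CGM Agt AP) (s : M.St), satAB M s φ

/-- Propositional evaluation, treating diamond formulas as atoms (valuation `w`). -/
def evalAB {Agt AP : Type} (v : AP → Prop) (w : FormAB Agt AP → Prop) :
    FormAB Agt AP → Prop
  | FormAB.top => True
  | FormAB.bot => False
  | FormAB.atom p => v p
  | FormAB.natom p => ¬ v p
  | FormAB.and φ ψ => evalAB v w φ ∧ evalAB v w ψ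
  | FormAB.or φ ψ => evalAB v w φ ∨ evalAB v w ψ
  | FormAB.dia A φ => w (FormAB.dia A φ)

/-- Derivability in the axiomatic system for CL_AB. -/
inductive DerAB {Agt AP : Type} : FormAB Agt AP → Prop
  | r1 (Γ : List (FormAB Agt AP)) (ψ : FormAB Agt AP) :
      (∀ φ ∈ Γ, DerAB φ) →
      (∀ (v : AP → Prop) (w : FormAB Agt AP → Prop),
        (∀ φ ∈ Γ, evalAB v w φ) → evalAB v w ψ) →
      DerAB ψ
  | r2 (A : Set Agt) (φ : FormAB Agt AP) : DerAB φ → DerAB (FormAB.dia A φ)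
  | r3 (A : Set Agt) (φ1 φ2 χ : FormAB Agt AP) :
      DerAB (FormAB.or (FormAB.dia A (FormAB.or φ1 φ2)) χ) →
      DerAB (FormAB.or (FormAB.dia A φ1) (FormAB.or (FormAB.dia Set.univ φ2) χ))

/-- Literals of Φ_CL_AB. -/
inductive IsLitAB {Agt AP : Type} : FormAB Agt AP → Prop
  | atom (p : AP) : IsLitAB (FormAB.atom p)
  | natom (p : AP) : IsLitAB (FormAB.natom p)

/-- Elementary disjunctions (⊥ is the empty disjunction). -/
inductive IsElemDisjAB {Agt AP : Type} : FormAB Agt AP → Prop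
  | bot : IsElemDisjAB FormAB.bot
  | lit {φ : FormAB Agt AP} : IsLitAB φ → IsElemDisjAB φ
  | or {φ ψ : FormAB Agt AP} : IsElemDisjAB φ → IsElemDisjAB ψ →
      IsElemDisjAB (FormAB.or φ ψ)

/-- Finite disjunction of a list of formulas (empty disjunction is ⊥). -/
def bigOrAB {Agt AP : Type} : List (FormAB Agt AP) → FormAB Agt AP
  | [] => FormAB.bot
  | φ :: l => FormAB.or φ (bigOrAB l)


namespace CLABAux

open FormAB

variable {Agt AP : Type}

/-! ### Size of formulas -/

def sizeF : FormAB Agt AP → ℕ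
  | .top => 1
  | .bot => 1
  | .atom _ => 1
  | .natom _ => 1
  | .and φ ψ => sizeF φ + sizeF ψ + 1
  | .or φ ψ => sizeF φ + sizeF ψ + 1
  | .dia _ φ => sizeF φ + 1

def sizeL (Γ : List (FormAB Agt AP)) : ℕ := (Γ.map sizeF).sum

lemma sizeF_pos (φ : FormAB Agt AP) : 0 < sizeF φ := by
  cases φ <;> simp [sizeF]

lemma sizeL_cons (φ : FormAB Agt AP) (Γ) : sizeL (φ :: Γ) = sizeF φ + sizeL Γ := by
  simp [sizeL]

lemma sizeL_append (Γ Δ : List (FormAB Agt AP)) : sizeL (Γ ++ Δ) = sizeL Γ + sizeL Δ := by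
  simp [sizeL]

/-! ### Propositional reasoning helpers -/

lemma eval_bigOr (v : AP → Prop) (w : FormAB Agt AP → Prop) (Γ : List (FormAB Agt AP)) :
    evalAB v w (bigOrAB Γ) ↔ ∃ φ ∈ Γ, evalAB v w φ := by
  induction Γ with
  | nil => simp [bigOrAB, evalAB]
  | cons a l ih => simp [bigOrAB, evalAB, ih]

lemma der_taut {ψ : FormAB Agt AP} (h : ∀ v w, evalAB v w ψ) : DerAB ψ :=
  DerAB.r1 [] ψ (by simp) (fun v w _ => h v w)

lemma der_imp {φ ψ : FormAB Agt AP} (h : DerAB φ)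
    (himp : ∀ v w, evalAB v w φ → evalAB v w ψ) : DerAB ψ :=
  DerAB.r1 [φ] ψ (by intro χ hχ; simp at hχ; subst hχ; exact h)
    (fun v w hall => himp v w (hall φ (by simp)))

lemma der_imp2 {φ1 φ2 ψ : FormAB Agt AP} (h1 : DerAB φ1) (h2 : DerAB φ2)
    (himp : ∀ v w, evalAB v w φ1 → evalAB v w φ2 → evalAB v w ψ) : DerAB ψ :=
  DerAB.r1 [φ1, φ2] ψ
    (by intro χ hχ; simp at hχ; rcases hχ with rfl | rfl; exacts [h1, h2])
    (fun v w hall => himp v w (hall φ1 (by simp)) (hall φ2 (by simp)))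

/-! ### R3 chains -/

def altCons (ψ : FormAB Agt AP) : List (FormAB Agt AP) → FormAB Agt AP
  | [] => ψ
  | u :: l => FormAB.or ψ (altCons u l)

def altDias : List (FormAB Agt AP) → FormAB Agt AP → FormAB Agt AP
  | [], χ => χ
  | u :: l, χ => FormAB.or (FormAB.dia Set.univ u) (altDias l χ)

lemma eval_altCons (v w) : ∀ (l : List (FormAB Agt AP)) (ψ),
    evalAB v w (altCons ψ l) ↔ evalAB v w ψ ∨ ∃ u ∈ l, evalAB v w u := by
  intro l
  induction l with
  | nil => intro ψ; simp [altCons]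
  | cons u l ih =>
    intro ψ
    simp only [altCons, evalAB, ih u, List.exists_mem_cons_iff]

lemma eval_altDias (v : AP → Prop) (w : FormAB Agt AP → Prop) :
    ∀ (l : List (FormAB Agt AP)) (χ),
    evalAB v w (altDias l χ) ↔ (∃ u ∈ l, w (FormAB.dia Set.univ u)) ∨ evalAB v w χ := by
  intro l
  induction l with
  | nil => intro χ; simp [altDias]
  | cons u l ih =>
    intro χ
    simp only [altDias, evalAB, ih χ, List.exists_mem_cons_iff]
    exact or_assoc.symm

lemma der_chain : ∀ (l : List (FormAB Agt AP)) (B : Set Agt) (ψ χ : FormAB Agt AP),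
    DerAB (FormAB.or (FormAB.dia B (altCons ψ l)) χ) →
    DerAB (FormAB.or (FormAB.dia B ψ) (altDias l χ)) := by
  intro l
  induction l with
  | nil => intro B ψ χ h; simpa [altCons, altDias] using h
  | cons u l ih =>
    intro B ψ χ h
    have h2 := DerAB.r3 B ψ (altCons u l) χ h
    have h3 : DerAB (FormAB.or (FormAB.dia Set.univ (altCons u l))
        (FormAB.or (FormAB.dia B ψ) χ)) :=
      der_imp h2 (by intro v w; simp [evalAB]; tauto)
    have h4 := ih Set.univ u (FormAB.or (FormAB.dia B ψ) χ) h3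
    refine der_imp h4 ?_
    intro v w
    simp only [evalAB, altDias, eval_altDias]
    rintro (hu | (⟨x, hx, hwx⟩ | (hb | hc)))
    · exact Or.inr (Or.inl hu)
    · exact Or.inr (Or.inr (Or.inl ⟨x, hx, hwx⟩))
    · exact Or.inl hb
    · exact Or.inr (Or.inr (Or.inr hc))

/-! ### The tree-model template -/

lemma subJA_full {Act : Type} (σ σ' : Agt → Option Act) (h : ∀ a, (σ a).isSome)
    (hs : subJA σ σ') : σ' = σ := by
  funext a
  rcases Option.isSome_iff_exists.1 (h a) with ⟨x, hx⟩
  rw [hs a x hx, hx]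

noncomputable def Mdl (g : List ℕ → (Agt → Option ℕ) → ℕ) (lb : List ℕ → Set AP) :
    CGM Agt AP where
  St := List ℕ
  Act := ℕ
  st_ne := ⟨[]⟩
  act_ne := ⟨0⟩
  aja := fun _ A => {σ | ∀ a, (σ a).isSome ↔ a ∈ A}
  out := fun u σ =>
    {t | ∃ σ', (∀ a, (σ' a).isSome) ∧ subJA σ σ' ∧ t = u ++ [g u σ']}
  lab := lb
  aja_ne := by
    intro s A
    refine ⟨fun a => if a ∈ A then some 0 else none, ?_⟩
    intro a
    by_cases h : a ∈ A <;> simp [h]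
  aja_dom := by intro s A σ hσ a; exact hσ a
  aja_glue := by
    intro s A σ hA hdom
    constructor
    · intro _ a ha b
      simp only [restrictJA]
      by_cases hb : b ∈ ({a} : Set Agt)
      · simp only [hb, if_pos]
        rcases hb with rfl
        simp [hdom b, ha]
      · simp [hb]
    · intro _
      exact hdom
  out_univ := by
    intro s σ hσ
    refine ⟨s ++ [g s σ], ?_⟩
    ext t
    simp only [Set.mem_setOf_eq, Set.mem_singleton_iff]
    constructor
    · rintro ⟨σ', hfull, hsub, rfl⟩
      rw [subJA_full σ σ' (fun a => (hσ a).2 (Set.mem_univ a)) hsub]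
    · rintro rfl
      exact ⟨σ, fun a => (hσ a).2 (Set.mem_univ a), fun a x hx => hx, rfl⟩
  out_univ_not := by
    intro s σ hfull hmem
    exact absurd (fun a => ⟨fun _ => Set.mem_univ a, fun _ => hfull a⟩) hmem
  out_glue := by
    intro s A hA σ hσ
    ext t
    simp only [Set.mem_setOf_eq]
    constructor
    · rintro ⟨σ', hfull, hsub, rfl⟩
      refine ⟨σ', fun a => ⟨fun _ => Set.mem_univ a, fun _ => hfull a⟩, hsub,
        σ', hfull, fun a x hx => hx, rfl⟩
    · rintro ⟨σ', hσ', hsub, σ'', hfull'', hsub'', rfl⟩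
      have hfull' : ∀ a, (σ' a).isSome := fun a => (hσ' a).2 (Set.mem_univ a)
      rw [subJA_full σ' σ'' hfull' hsub'']
      exact ⟨σ', hfull', hsub, rfl⟩
  out_not := by
    intro s A σ hdom hA hmem
    exact absurd (fun a => hdom a) hmem

lemma sat_atom (g lb) (u : List ℕ) (p : AP) :
    satAB (Mdl (Agt := Agt) g lb) u (FormAB.atom p) ↔ p ∈ lb u := Iff.rfl

lemma sat_natom (g lb) (u : List ℕ) (p : AP) :
    satAB (Mdl (Agt := Agt) g lb) u (FormAB.natom p) ↔ p ∉ lb u := Iff.rfl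

lemma sat_dia_iff (g lb) (u : List ℕ) (A : Set Agt) (φ : FormAB Agt AP) :
    satAB (Mdl g lb) u (FormAB.dia A φ) ↔
      ∃ σ : Agt → Option ℕ, (∀ a, (σ a).isSome ↔ a ∈ A) ∧
        ∀ σ', (∀ a, (σ' a).isSome) → subJA σ σ' →
          satAB (Mdl g lb) (u ++ [g u σ']) φ := by
  constructor
  · rintro ⟨σ, hσ, hall⟩
    exact ⟨σ, hσ, fun σ' hf hs => hall _ ⟨σ', hf, hs, rfl⟩⟩
  · rintro ⟨σ, hσ, hall⟩
    refine ⟨σ, hσ, ?_⟩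
    rintro t ⟨σ', hf, hs, rfl⟩
    exact hall σ' hf hs

lemma sat_shift (g : List ℕ → (Agt → Option ℕ) → ℕ) (lb : List ℕ → Set AP)
    (w : List ℕ) (φ : FormAB Agt AP) : ∀ (v : List ℕ),
    satAB (Mdl g lb) (w ++ v) φ ↔
      satAB (Mdl (fun v' => g (w ++ v')) (fun v' => lb (w ++ v'))) v φ := by
  induction φ with
  | top => intro v; simp [satAB]
  | bot => intro v; simp [satAB]
  | atom p => intro v; exact Iff.rfl
  | natom p => intro v; exact Iff.rfl
  | and φ ψ ihφ ihψ => intro v; simp only [satAB]; rw [ihφ v, ihψ v]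
  | or φ ψ ihφ ihψ => intro v; simp only [satAB]; rw [ihφ v, ihψ v]
  | dia A ψ ih =>
    intro v
    rw [sat_dia_iff, sat_dia_iff]
    constructor
    · rintro ⟨σ, h1, h2⟩
      refine ⟨σ, h1, fun σ' hf hs => ?_⟩
      have h3 := h2 σ' hf hs
      rw [List.append_assoc] at h3
      exact (ih (v ++ [g (w ++ v) σ'])).1 h3
    · rintro ⟨σ, h1, h2⟩
      refine ⟨σ, h1, fun σ' hf hs => ?_⟩
      have h3 := (ih (v ++ [g (w ++ v) σ'])).2 (h2 σ' hf hs)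
      rwa [List.append_assoc]

/-! ### Combining models, steering -/

def compG [Fintype Agt] (k : ℕ) (gs : ℕ → List ℕ → (Agt → Option ℕ) → ℕ) :
    List ℕ → (Agt → Option ℕ) → ℕ
  | [], σ => (∑ a, (σ a).getD 0) % k
  | c :: v, σ => gs c v σ

def compL (lb0 : Set AP) (ls : ℕ → List ℕ → Set AP) : List ℕ → Set AP
  | [] => lb0
  | c :: v => ls c v

lemma sat_child [Fintype Agt] (k : ℕ) (gs : ℕ → List ℕ → (Agt → Option ℕ) → ℕ)
    (lb0 : Set AP) (ls : ℕ → List ℕ → Set AP) (c : ℕ) (v : List ℕ) (ψ : FormAB Agt AP) :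
    satAB (Mdl (compG k gs) (compL lb0 ls)) (c :: v) ψ ↔ satAB (Mdl (gs c) (ls c)) v ψ := by
  have h := sat_shift (compG k gs) (compL lb0 ls) [c] ψ v
  simp only [List.singleton_append] at h
  exact h

lemma steer [Fintype Agt] (k : ℕ) (hk : 0 < k) (i : ℕ) (hi : i < k) (A : Set Agt)
    (hA : A ≠ Set.univ) (σ : Agt → Option ℕ) (hdom : ∀ a, (σ a).isSome ↔ a ∈ A) :
    ∃ σ' : Agt → Option ℕ, (∀ a, (σ' a).isSome) ∧ subJA σ σ' ∧
      (∑ a, (σ' a).getD 0) % k = i := by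
  obtain ⟨b, hb⟩ := (Set.ne_univ_iff_exists_notMem A).1 hA
  classical
  set base : Agt → Option ℕ := fun a => if a ∈ A then σ a else some 0 with hbase
  set rest := ∑ a ∈ Finset.univ.erase b, (base a).getD 0 with hrest
  set r := i + (k - rest % k) with hr
  refine ⟨Function.update base b (some r), ?_, ?_, ?_⟩
  · intro a
    by_cases hab : a = b
    · subst hab; simp [Function.update_self]
    · rw [Function.update_of_ne hab]
      by_cases ha : a ∈ A
      · simpa [hbase, ha] using (hdom a).2 ha
      · simp [hbase, ha]
  · intro a x hx
    have haA : a ∈ A := (hdom a).1 (by simp [hx])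
    have hab : a ≠ b := fun h => hb (h ▸ haA)
    rw [Function.update_of_ne hab]
    simp [hbase, haA, hx]
  · have hfn : (fun a => ((Function.update base b (some r)) a).getD 0) =
        Function.update (fun a => (base a).getD 0) b r := by
      funext a
      by_cases hab : a = b
      · subst hab; simp [Function.update_self]
      · rw [Function.update_of_ne hab, Function.update_of_ne hab]
    have hsum : ∑ a, ((Function.update base b (some r)) a).getD 0 = r + rest := by
      calc ∑ a, ((Function.update base b (some r)) a).getD 0
          = ∑ a, Function.update (fun a => (base a).getD 0) b r a := by rw [hfn]
        _ = r + rest := by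
            rw [Finset.sum_update_of_mem (Finset.mem_univ b)]
            congr 1
            rw [hrest]
            apply Finset.sum_congr _ (fun _ _ => rfl)
            ext a
            simp [Finset.mem_erase, Finset.mem_sdiff, and_comm]
    rw [hsum]
    have hm : rest % k < k := Nat.mod_lt _ hk
    have e2 : r + rest % k = i + k := by omega
    calc (r + rest) % k = (r + rest % k) % k := (Nat.add_mod_mod r rest k).symm
      _ = (i + k) % k := by rw [e2]
      _ = i % k := Nat.add_mod_right i k
      _ = i := Nat.mod_eq_of_lt hi

/-! ### Extraction of diamonds -/

def toDia : FormAB Agt AP → Option (Set Agt × FormAB Agt AP)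
  | FormAB.dia A ψ => some (A, ψ)
  | _ => none

lemma mem_toDia (Γ : List (FormAB Agt AP)) (A : Set Agt) (ψ : FormAB Agt AP) :
    (A, ψ) ∈ Γ.filterMap toDia ↔ FormAB.dia A ψ ∈ Γ := by
  rw [List.mem_filterMap]
  constructor
  · rintro ⟨χ, hχ, he⟩
    cases χ <;> simp [toDia] at he
    rcases he with ⟨rfl, rfl⟩
    exact hχ
  · intro hχ
    exact ⟨_, hχ, rfl⟩

lemma sizeD_le (Γ : List (FormAB Agt AP)) :
    ((Γ.filterMap toDia).map (fun x => sizeF x.2 + 1)).sum ≤ sizeL Γ := by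
  induction Γ with
  | nil => simp [sizeL]
  | cons χ Γ ih =>
    cases χ <;>
      simp only [List.filterMap_cons, toDia, List.map_cons, List.sum_cons, sizeL_cons,
        sizeF] <;>
      omega

lemma filter_sum_split (l : List (Set Agt × FormAB Agt AP))
    (p : Set Agt × FormAB Agt AP → Prop) [DecidablePred p]
    (g : Set Agt × FormAB Agt AP → ℕ) :
    ((l.filter (fun x => decide (p x))).map g).sum
      + ((l.filter (fun x => !decide (p x))).map g).sum = (l.map g).sum := by
  induction l with
  | nil => simp
  | cons x l ih =>
    by_cases h : p x <;> simp [List.filter_cons, h] <;> omega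

lemma sum_map_snd (l : List (Set Agt × FormAB Agt AP)) :
    sizeL (l.map Prod.snd) + l.length = (l.map (fun x => sizeF x.2 + 1)).sum := by
  induction l with
  | nil => simp [sizeL]
  | cons x l ih => simp [sizeL_cons, List.map_cons] at ih ⊢; omega

lemma le_sum_of_mem {l : List ℕ} {a : ℕ} (h : a ∈ l) : a ≤ l.sum := by
  induction l with
  | nil => simp at h
  | cons x l ih =>
    rcases List.mem_cons.1 h with rfl | h'
    · simp
    · simp only [List.sum_cons]
      exact le_trans (ih h') (Nat.le_add_left _ _)

/-! ### The main countermodel construction -/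

lemma main [Fintype Agt] (n : ℕ) : ∀ Γ : List (FormAB Agt AP), sizeL Γ ≤ n →
    ¬ DerAB (bigOrAB Γ) →
    ∃ (g : List ℕ → (Agt → Option ℕ) → ℕ) (lb : List ℕ → Set AP),
      ∀ φ ∈ Γ, ¬ satAB (Mdl g lb) ([] : List ℕ) φ := by
  induction n using Nat.strong_induction_on with
  | _ n ih =>
  intro Γ hsz hnd
  by_cases htop : (FormAB.top : FormAB Agt AP) ∈ Γ
  · exact absurd (der_taut fun v w => (eval_bigOr v w Γ).2 ⟨FormAB.top, htop, trivial⟩) hnd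
  by_cases hbot : (FormAB.bot : FormAB Agt AP) ∈ Γ
  · obtain ⟨Γ₁, Γ₂, rfl⟩ := List.append_of_mem hbot
    have hnd' : ¬ DerAB (bigOrAB (Γ₁ ++ Γ₂)) := by
      intro hD
      refine hnd (der_imp hD ?_)
      intro v w he
      rw [eval_bigOr] at he ⊢
      obtain ⟨χ, hχ, hev⟩ := he
      refine ⟨χ, ?_, hev⟩
      simp only [List.mem_append, List.mem_cons] at hχ ⊢
      tauto
    have hsz' : sizeL (Γ₁ ++ Γ₂) < n := by
      have h1 := sizeL_append Γ₁ ((FormAB.bot : FormAB Agt AP) :: Γ₂)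
      have h2 := sizeL_append Γ₁ Γ₂
      have h3 := sizeL_cons (FormAB.bot : FormAB Agt AP) Γ₂
      have h4 : sizeF (FormAB.bot : FormAB Agt AP) = 1 := rfl
      omega
    obtain ⟨g, lb, hg⟩ := ih _ hsz' _ le_rfl hnd'
    refine ⟨g, lb, ?_⟩
    intro φ hφ
    simp only [List.mem_append, List.mem_cons] at hφ
    rcases hφ with h | h | h
    · exact hg φ (List.mem_append_left _ h)
    · subst h; simp [satAB]
    · exact hg φ (List.mem_append_right _ h)
  by_cases hand : ∃ φ1 φ2 : FormAB Agt AP, FormAB.and φ1 φ2 ∈ Γ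
  · obtain ⟨φ1, φ2, hmem⟩ := hand
    obtain ⟨Γ₁, Γ₂, rfl⟩ := List.append_of_mem hmem
    have hs1 := sizeL_append Γ₁ (FormAB.and φ1 φ2 :: Γ₂)
    have hs2 := sizeL_cons (FormAB.and φ1 φ2) Γ₂
    have hs3 : sizeF (FormAB.and φ1 φ2) = sizeF φ1 + sizeF φ2 + 1 := rfl
    have hs4 := sizeL_append Γ₁ Γ₂
    have hp1 := sizeF_pos φ1
    have hp2 := sizeF_pos φ2
    have hkey : ¬ DerAB (bigOrAB (φ1 :: (Γ₁ ++ Γ₂))) ∨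
        ¬ DerAB (bigOrAB (φ2 :: (Γ₁ ++ Γ₂))) := by
      by_contra hc
      push_neg at hc
      refine hnd (der_imp2 hc.1 hc.2 ?_)
      intro v w h1 h2
      rw [eval_bigOr] at h1 h2 ⊢
      obtain ⟨χ1, hχ1, he1⟩ := h1
      obtain ⟨χ2, hχ2, he2⟩ := h2
      simp only [List.mem_cons, List.mem_append] at hχ1 hχ2
      rcases hχ1 with h1' | h1'
      · rcases hχ2 with h2' | h2'
        · refine ⟨FormAB.and φ1 φ2, by simp, ?_⟩
          exact ⟨h1' ▸ he1, h2' ▸ he2⟩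
        · exact ⟨χ2, by simp only [List.mem_append, List.mem_cons]; tauto, he2⟩
      · exact ⟨χ1, by simp only [List.mem_append, List.mem_cons]; tauto, he1⟩
    rcases hkey with hk | hk
    · have hsz' : sizeL (φ1 :: (Γ₁ ++ Γ₂)) < n := by rw [sizeL_cons]; omega
      obtain ⟨g, lb, hg⟩ := ih _ hsz' _ le_rfl hk
      refine ⟨g, lb, ?_⟩
      intro φ hφ
      simp only [List.mem_append, List.mem_cons] at hφ
      rcases hφ with h | h | h
      · exact hg φ (by simp only [List.mem_cons, List.mem_append]; tauto)
      · subst h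
        intro hs
        exact hg φ1 (by simp) hs.1
      · exact hg φ (by simp only [List.mem_cons, List.mem_append]; tauto)
    · have hsz' : sizeL (φ2 :: (Γ₁ ++ Γ₂)) < n := by rw [sizeL_cons]; omega
      obtain ⟨g, lb, hg⟩ := ih _ hsz' _ le_rfl hk
      refine ⟨g, lb, ?_⟩
      intro φ hφ
      simp only [List.mem_append, List.mem_cons] at hφ
      rcases hφ with h | h | h
      · exact hg φ (by simp only [List.mem_cons, List.mem_append]; tauto)
      · subst h
        intro hs
        exact hg φ2 (by simp) hs.2
      · exact hg φ (by simp only [List.mem_cons, List.mem_append]; tauto)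
  by_cases hor : ∃ φ1 φ2 : FormAB Agt AP, FormAB.or φ1 φ2 ∈ Γ
  · obtain ⟨φ1, φ2, hmem⟩ := hor
    obtain ⟨Γ₁, Γ₂, rfl⟩ := List.append_of_mem hmem
    have hnd' : ¬ DerAB (bigOrAB (φ1 :: φ2 :: (Γ₁ ++ Γ₂))) := by
      intro hD
      refine hnd (der_imp hD ?_)
      intro v w he
      rw [eval_bigOr] at he ⊢
      obtain ⟨χ, hχ, hev⟩ := he
      simp only [List.mem_cons, List.mem_append] at hχ
      rcases hχ with h | h | h | h
      · exact ⟨FormAB.or φ1 φ2, by simp, Or.inl (h ▸ hev)⟩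
      · exact ⟨FormAB.or φ1 φ2, by simp, Or.inr (h ▸ hev)⟩
      · exact ⟨χ, by simp only [List.mem_append, List.mem_cons]; tauto, hev⟩
      · exact ⟨χ, by simp only [List.mem_append, List.mem_cons]; tauto, hev⟩
    have hsz' : sizeL (φ1 :: φ2 :: (Γ₁ ++ Γ₂)) < n := by
      have h1 := sizeL_append Γ₁ (FormAB.or φ1 φ2 :: Γ₂)
      have h2 := sizeL_cons (FormAB.or φ1 φ2) Γ₂
      have h3 : sizeF (FormAB.or φ1 φ2) = sizeF φ1 + sizeF φ2 + 1 := rfl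
      have h4 := sizeL_append Γ₁ Γ₂
      have h5 := sizeL_cons φ1 (φ2 :: (Γ₁ ++ Γ₂))
      have h6 := sizeL_cons φ2 (Γ₁ ++ Γ₂)
      omega
    obtain ⟨g, lb, hg⟩ := ih _ hsz' _ le_rfl hnd'
    refine ⟨g, lb, ?_⟩
    intro φ hφ
    simp only [List.mem_append, List.mem_cons] at hφ
    rcases hφ with h | h | h
    · exact hg φ (by simp only [List.mem_cons, List.mem_append]; tauto)
    · subst h
      intro hs
      rcases hs with hs | hs
      · exact hg φ1 (by simp) hs
      · exact hg φ2 (by simp) hs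
    · exact hg φ (by simp only [List.mem_cons, List.mem_append]; tauto)
  by_cases hcon : ∃ p, FormAB.atom p ∈ Γ ∧ FormAB.natom p ∈ Γ
  · obtain ⟨p, h1, h2⟩ := hcon
    refine absurd (der_taut ?_) hnd
    intro v w
    rw [eval_bigOr]
    by_cases hv : v p
    · exact ⟨FormAB.atom p, h1, hv⟩
    · exact ⟨FormAB.natom p, h2, hv⟩
  have hlit : ∀ χ ∈ Γ, (∃ p, χ = FormAB.atom p) ∨ (∃ p, χ = FormAB.natom p) ∨
      (∃ A ψ, χ = FormAB.dia A ψ) := by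
    intro χ hχ
    cases χ with
    | top => exact absurd hχ htop
    | bot => exact absurd hχ hbot
    | atom p => exact Or.inl ⟨p, rfl⟩
    | natom p => exact Or.inr (Or.inl ⟨p, rfl⟩)
    | and φ1 φ2 => exact absurd ⟨φ1, φ2, hχ⟩ hand
    | or φ1 φ2 => exact absurd ⟨φ1, φ2, hχ⟩ hor
    | dia A ψ => exact Or.inr (Or.inr ⟨A, ψ, rfl⟩)
  classical
  set allD := Γ.filterMap toDia with hallD
  set Usl := (allD.filter (fun x => decide (x.1 = Set.univ))).map Prod.snd with hUsl
  set Isl := allD.filter (fun x => !decide (x.1 = Set.univ)) with hIslDef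
  have hUs1 : ∀ u ∈ Usl, FormAB.dia Set.univ u ∈ Γ := by
    intro u hu
    rw [hUsl] at hu
    obtain ⟨x, hx, rfl⟩ := List.mem_map.1 hu
    have hx' := List.mem_filter.1 hx
    have hx1 : x.1 = Set.univ := by simpa using hx'.2
    have hxm : (x.1, x.2) ∈ allD := by simpa using hx'.1
    rw [hx1] at hxm
    exact (mem_toDia Γ Set.univ x.2).1 hxm
  have hUs2 : ∀ ψ, (Set.univ, ψ) ∈ allD → ψ ∈ Usl := by
    intro ψ h
    rw [hUsl]
    exact List.mem_map.2 ⟨(Set.univ, ψ), List.mem_filter.2 ⟨h, by simp⟩, rfl⟩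
  have hIs2 : ∀ A ψ, (A, ψ) ∈ allD → A ≠ Set.univ → (A, ψ) ∈ Isl := by
    intro A ψ h hA
    rw [hIslDef]
    exact List.mem_filter.2 ⟨h, by simp [hA]⟩
  have hchildD : ∀ (A : Set Agt) ψ, FormAB.dia A ψ ∈ Γ → ¬ DerAB (bigOrAB (ψ :: Usl)) := by
    intro A ψ hmem hD
    have h1 : DerAB (altCons ψ Usl) := by
      refine der_imp hD ?_
      intro v w he
      rw [eval_bigOr] at he
      rw [eval_altCons]
      simpa [List.exists_mem_cons_iff] using he
    have h2 := DerAB.r2 A _ h1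
    have h3 : DerAB (FormAB.or (FormAB.dia A (altCons ψ Usl)) FormAB.bot) :=
      der_imp h2 (fun v w he => Or.inl he)
    have h4 := der_chain Usl A ψ FormAB.bot h3
    refine hnd (der_imp h4 ?_)
    intro v w he
    rw [eval_bigOr]
    have he' : evalAB v w (FormAB.dia A ψ) ∨ evalAB v w (altDias Usl FormAB.bot) := he
    rcases he' with hl | hr
    · exact ⟨_, hmem, hl⟩
    · rcases (eval_altDias v w Usl FormAB.bot).1 hr with ⟨u, hu, hwu⟩ | hf
      · exact ⟨_, hUs1 u hu, hwu⟩
      · exact hf.elim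
  have hchildU : Usl ≠ [] → ¬ DerAB (bigOrAB Usl) := by
    intro hne hD
    obtain ⟨u, rest, hur⟩ : ∃ u rest, Usl = u :: rest := by
      cases hUE : Usl with
      | nil => exact absurd hUE hne
      | cons a l => exact ⟨a, l, rfl⟩
    rw [hur] at hD
    have h1 : DerAB (altCons u rest) := by
      refine der_imp hD ?_
      intro v w he
      rw [eval_bigOr] at he
      rw [eval_altCons]
      simpa [List.exists_mem_cons_iff] using he
    have h2 := DerAB.r2 Set.univ _ h1
    have h3 : DerAB (FormAB.or (FormAB.dia Set.univ (altCons u rest)) FormAB.bot) :=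
      der_imp h2 (fun v w he => Or.inl he)
    have h4 := der_chain rest Set.univ u FormAB.bot h3
    refine hnd (der_imp h4 ?_)
    intro v w he
    rw [eval_bigOr]
    have he' : evalAB v w (FormAB.dia Set.univ u) ∨ evalAB v w (altDias rest FormAB.bot) := he
    rcases he' with hl | hr
    · exact ⟨_, hUs1 u (by rw [hur]; exact List.mem_cons_self), hl⟩
    · rcases (eval_altDias v w rest FormAB.bot).1 hr with ⟨x, hx, hwx⟩ | hf
      · exact ⟨_, hUs1 x (by rw [hur]; exact List.mem_cons_of_mem u hx), hwx⟩
      · exact hf.elim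
  have hsplit := filter_sum_split allD (fun x => x.1 = Set.univ) (fun x => sizeF x.2 + 1)
  rw [← hIslDef] at hsplit
  have hDle := sizeD_le Γ
  rw [← hallD] at hDle
  have hsnd := sum_map_snd (allD.filter (fun x => decide (x.1 = Set.univ)))
  rw [← hUsl] at hsnd
  have hlenU : Usl.length = (allD.filter (fun x => decide (x.1 = Set.univ))).length := by
    rw [hUsl]; exact List.length_map _
  by_cases hD0 : allD = []
  · refine ⟨fun _ _ => 0, fun _ => {p | FormAB.natom p ∈ Γ}, ?_⟩
    intro φ hφ
    rcases hlit φ hφ with ⟨p, rfl⟩ | ⟨p, rfl⟩ | ⟨A, ψ, rfl⟩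
    · rw [sat_atom]
      intro hp
      exact hcon ⟨p, hφ, hp⟩
    · rw [sat_natom]
      intro hnp
      exact hnp hφ
    · exfalso
      have hm : (A, ψ) ∈ allD := by rw [hallD]; exact (mem_toDia Γ A ψ).2 hφ
      rw [hD0] at hm
      simp at hm
  set tailC : List (List (FormAB Agt AP)) := if Usl = [] then [] else [Usl] with htailC
  set children := Isl.map (fun x => x.2 :: Usl) ++ tailC with hchildren
  have hch_mem : ∀ Δ ∈ children, (∃ x ∈ Isl, Δ = x.2 :: Usl) ∨ (Usl ≠ [] ∧ Δ = Usl) := by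
    intro Δ hΔ
    rw [hchildren] at hΔ
    rcases List.mem_append.1 hΔ with h | h
    · obtain ⟨x, hx, rfl⟩ := List.mem_map.1 h
      exact Or.inl ⟨x, hx, rfl⟩
    · right
      rw [htailC] at h
      by_cases hU : Usl = []
      · rw [if_pos hU] at h
        simp at h
      · rw [if_neg hU] at h
        simp at h
        exact ⟨hU, h⟩
  have hchne : children ≠ [] := by
    obtain ⟨x, hx⟩ := List.exists_mem_of_ne_nil allD hD0
    by_cases hx1 : x.1 = Set.univ
    · have hxu : x.2 ∈ Usl := hUs2 x.2 (by rw [← hx1]; simpa using hx)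
      have hUne : Usl ≠ [] := List.ne_nil_of_mem hxu
      have : Usl ∈ children := by
        rw [hchildren, htailC, if_neg hUne]
        exact List.mem_append_right _ (by simp)
      exact List.ne_nil_of_mem this
    · have hxI : (x.1, x.2) ∈ Isl := hIs2 x.1 x.2 (by simpa using hx) hx1
      have : (x.2 :: Usl) ∈ children := by
        rw [hchildren]
        exact List.mem_append_left _ (List.mem_map.2 ⟨_, hxI, rfl⟩)
      exact List.ne_nil_of_mem this
  have hch_small : ∀ Δ ∈ children, sizeL Δ < n ∧ ¬ DerAB (bigOrAB Δ) := by
    intro Δ hΔ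
    rcases hch_mem Δ hΔ with ⟨x, hx, rfl⟩ | ⟨hU, rfl⟩
    · constructor
      · have h1 : sizeF x.2 + 1 ≤ (Isl.map (fun y => sizeF y.2 + 1)).sum :=
          le_sum_of_mem (List.mem_map_of_mem hx)
        rw [sizeL_cons]
        omega
      · have hxd : (x.1, x.2) ∈ allD := by
          have := List.mem_of_mem_filter (by rw [← hIslDef]; exact hx)
          simpa using this
        have hmem : FormAB.dia x.1 x.2 ∈ Γ := by
          rw [hallD] at hxd
          exact (mem_toDia Γ x.1 x.2).1 hxd
        exact hchildD x.1 x.2 hmem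
    · constructor
      · have hUlen : 0 < Usl.length := List.length_pos_iff.2 hU
        omega
      · exact hchildU hU
  have HC : ∀ c : Fin children.length, ∃ g lb, ∀ φ ∈ children.get c,
      ¬ satAB (Mdl g lb) ([] : List ℕ) φ := by
    intro c
    obtain ⟨hsc, hdc⟩ := hch_small _ (List.get_mem children c)
    exact ih _ hsc _ le_rfl hdc
  choose gs lbs hgs using HC
  have hk : 0 < children.length := List.length_pos_iff.2 hchne
  set gs' : ℕ → List ℕ → (Agt → Option ℕ) → ℕ :=
    fun c => if h : c < children.length then gs ⟨c, h⟩ else fun _ _ => 0 with hgs'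
  set ls' : ℕ → List ℕ → Set AP :=
    fun c => if h : c < children.length then lbs ⟨c, h⟩ else fun _ => ∅ with hls'
  refine ⟨compG children.length gs', compL {p | FormAB.natom p ∈ Γ} ls', ?_⟩
  have hchild_false : ∀ (jv : ℕ) (hjlt : jv < children.length) (ψ : FormAB Agt AP),
      ψ ∈ children.get ⟨jv, hjlt⟩ →
      ¬ satAB (Mdl (compG children.length gs')
        (compL {p | FormAB.natom p ∈ Γ} ls')) [jv] ψ := by
    intro jv hjlt ψ hψ hs
    rw [sat_child] at hs
    have e1 : gs' jv = gs ⟨jv, hjlt⟩ := by simp only [hgs']; exact dif_pos hjlt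
    have e2 : ls' jv = lbs ⟨jv, hjlt⟩ := by simp only [hls']; exact dif_pos hjlt
    rw [e1, e2] at hs
    exact hgs ⟨jv, hjlt⟩ ψ hψ hs
  intro φ hφ
  rcases hlit φ hφ with ⟨p, rfl⟩ | ⟨p, rfl⟩ | ⟨A, ψ, rfl⟩
  · rw [sat_atom]
    intro hp
    exact hcon ⟨p, hφ, hp⟩
  · rw [sat_natom]
    intro hnp
    exact hnp hφ
  · intro hs
    rw [sat_dia_iff] at hs
    obtain ⟨σ, hdom, hall⟩ := hs
    have hAD : (A, ψ) ∈ allD := by rw [hallD]; exact (mem_toDia Γ A ψ).2 hφ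
    by_cases hAu : A = Set.univ
    · subst hAu
      have hfull : ∀ a, (σ a).isSome := fun a => (hdom a).2 (Set.mem_univ a)
      have h := hall σ hfull (fun a x hx => hx)
      set i := (∑ a, (σ a).getD 0) % children.length with hidef
      have hik : i < children.length := Nat.mod_lt _ hk
      have hival : compG children.length gs' [] σ = i := rfl
      rw [List.nil_append, hival] at h
      have hmemi : ψ ∈ children.get ⟨i, hik⟩ := by
        have hU : ψ ∈ Usl := hUs2 ψ hAD
        rcases hch_mem _ (List.get_mem children ⟨i, hik⟩) with ⟨x, hx, he⟩ | ⟨_, he⟩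
        · rw [he]; exact List.mem_cons_of_mem _ hU
        · rw [he]; exact hU
      exact hchild_false i hik ψ hmemi h
    · have hIslm : (A, ψ) ∈ Isl := hIs2 A ψ hAD hAu
      have hmemc : (ψ :: Usl) ∈ children := by
        rw [hchildren]
        exact List.mem_append_left _ (List.mem_map.2 ⟨(A, ψ), hIslm, rfl⟩)
      obtain ⟨j, hj⟩ := List.mem_iff_get.1 hmemc
      obtain ⟨jv, hjlt⟩ := j
      obtain ⟨σ', hfull, hsub, hmod⟩ := steer children.length hk jv hjlt A hAu σ hdom
      have h := hall σ' hfull hsub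
      have e : ([] : List ℕ) ++ [compG children.length gs' [] σ'] = [jv] := by
        rw [List.nil_append]
        have hmod' : compG children.length gs' [] σ' = jv := hmod
        rw [hmod']
      rw [e] at h
      have hψj : ψ ∈ children.get ⟨jv, hjlt⟩ := by rw [hj]; exact List.mem_cons_self
      exact hchild_false jv hjlt ψ hψj h

end CLABAux




/-- Completeness of CL_AB: every valid formula of Φ_CL_AB is derivable. -/
theorem completeness_CL_AB
    {Agt AP : Type} [Fintype Agt] [Nonempty Agt] [Countable AP]
    (φ : FormAB Agt AP) (h : validAB φ) : DerAB φ := by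
  by_contra hnd
  have hnd1 : ¬ DerAB (bigOrAB [φ]) := by
    intro hD
    refine hnd (CLABAux.der_imp hD ?_)
    intro v w he
    rcases (CLABAux.eval_bigOr v w [φ]).1 he with ⟨χ, hχ, hev⟩
    simp only [List.mem_singleton] at hχ
    rwa [hχ] at hev
  obtain ⟨g, lb, hg⟩ := CLABAux.main (CLABAux.sizeL [φ]) [φ] le_rfl hnd1
  exact hg φ (by simp) (h (CLABAux.Mdl g lb) ([] : List ℕ))
end

section
/- Soundness of CCSR_LI: every formula of Φ_CCSR_LI derivable in the axiomatic system for CCSR_LI is valid, i.e., for every φ ∈ Φ_CCSR_LI, if ⊢_CCSR_LI φ then ⊨ φ. -/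
open scoped Classical

/-- The liability fragment Φ_CCSR_LI. -/
inductive FormCLI (Agt AP : Type) : Type
  | top : FormCLI Agt AP
  | bot : FormCLI Agt AP
  | atom : AP → FormCLI Agt AP
  | natom : AP → FormCLI Agt AP
  | and : FormCLI Agt AP → FormCLI Agt AP → FormCLI Agt AP
  | or : FormCLI Agt AP → FormCLI Agt AP → FormCLI Agt AP
  | cbox : Set Agt → Set Agt → FormCLI Agt AP → FormCLI Agt AP → FormCLI Agt AP

/-- Satisfaction for Φ_CCSR_LI. -/
def satCLI {Agt AP : Type} (M : CGM Agt AP) : M.St → FormCLI Agt AP → Prop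
  | _, FormCLI.top => True
  | _, FormCLI.bot => False
  | s, FormCLI.atom p => p ∈ M.lab s
  | s, FormCLI.natom p => p ∉ M.lab s
  | s, FormCLI.and φ ψ => satCLI M s φ ∧ satCLI M s ψ
  | s, FormCLI.or φ ψ => satCLI M s φ ∨ satCLI M s ψ
  | s, FormCLI.cbox A B φ ψ =>
      ∀ σA ∈ M.aja s A,
        (∃ t ∈ M.out s σA, satCLI M t φ) ∨
        ∀ σB ∈ M.aja s B, ∃ t ∈ M.out s (uplusJA A B σA σB), satCLI M t ψ

/-- Validity for Φ_CCSR_LI. -/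
def validCLI {Agt AP : Type} (φ : FormCLI Agt AP) : Prop :=
  ∀ (M : CGM Agt AP) (s : M.St), satCLI M s φ

/-- Propositional evaluation, treating modal formulas as atoms (valuation `w`). -/
def evalCLI {Agt AP : Type} (v : AP → Prop) (w : FormCLI Agt AP → Prop) :
    FormCLI Agt AP → Prop
  | FormCLI.top => True
  | FormCLI.bot => False
  | FormCLI.atom p => v p
  | FormCLI.natom p => ¬ v p
  | FormCLI.and φ ψ => evalCLI v w φ ∧ evalCLI v w ψ
  | FormCLI.or φ ψ => evalCLI v w φ ∨ evalCLI v w ψ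
  | FormCLI.cbox A B φ ψ => w (FormCLI.cbox A B φ ψ)

/-- Derivability in the axiomatic system for CCSR_LI. -/
inductive DerCLI {Agt AP : Type} : FormCLI Agt AP → Prop
  | r1 (Γ : List (FormCLI Agt AP)) (ψ : FormCLI Agt AP) :
      (∀ φ ∈ Γ, DerCLI φ) →
      (∀ (v : AP → Prop) (w : FormCLI Agt AP → Prop),
        (∀ φ ∈ Γ, evalCLI v w φ) → evalCLI v w ψ) →
      DerCLI ψ
  | r2 (A : Set Agt) (φ : FormCLI Agt AP) :
      DerCLI φ → DerCLI (FormCLI.cbox A ∅ φ FormCLI.bot)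
  | r3 (A B : Set Agt) (φ ψ χ : FormCLI Agt AP) : A ∩ B = ∅ →
      DerCLI (FormCLI.or (FormCLI.cbox (A ∪ B) ∅ (FormCLI.or φ ψ) FormCLI.bot) χ) →
      DerCLI (FormCLI.or (FormCLI.cbox A ∅ φ FormCLI.bot)
        (FormCLI.or (FormCLI.cbox B ∅ ψ FormCLI.bot) χ))
  | r4 (A B : Set Agt) (φ ψ χ : FormCLI Agt AP) :
      DerCLI (FormCLI.or (FormCLI.cbox A ∅ φ FormCLI.bot) χ) →
      DerCLI (FormCLI.or (FormCLI.cbox A B φ ψ) χ)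
  | r5 (A B : Set Agt) (φ ψ χ : FormCLI Agt AP) :
      DerCLI (FormCLI.or (FormCLI.cbox (A ∪ B) ∅ (FormCLI.or φ ψ) FormCLI.bot) χ) →
      DerCLI (FormCLI.or (FormCLI.cbox A B φ ψ) χ)

/-- Literals of Φ_CCSR_LI. -/
inductive IsLitCLI {Agt AP : Type} : FormCLI Agt AP → Prop
  | atom (p : AP) : IsLitCLI (FormCLI.atom p)
  | natom (p : AP) : IsLitCLI (FormCLI.natom p)

/-- Elementary disjunctions (⊥ is the empty disjunction). -/
inductive IsElemDisjCLI {Agt AP : Type} : FormCLI Agt AP → Prop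
  | bot : IsElemDisjCLI FormCLI.bot
  | lit {φ : FormCLI Agt AP} : IsLitCLI φ → IsElemDisjCLI φ
  | or {φ ψ : FormCLI Agt AP} : IsElemDisjCLI φ → IsElemDisjCLI ψ →
      IsElemDisjCLI (FormCLI.or φ ψ)

/-- Finite disjunction of a list of formulas (empty disjunction is ⊥). -/
def bigOrCLI {Agt AP : Type} : List (FormCLI Agt AP) → FormCLI Agt AP
  | [] => FormCLI.bot
  | φ :: l => FormCLI.or φ (bigOrCLI l)

section Aux

variable {Agt AP : Type}

lemma subJA_trans {Act : Type} {σ1 σ2 σ3 : Agt → Option Act}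
    (h12 : subJA σ1 σ2) (h23 : subJA σ2 σ3) : subJA σ1 σ3 :=
  fun a x hx => h23 a x (h12 a x hx)

lemma aja_none_mem (M : CGM Agt AP) (s : M.St) :
    (fun _ => (none : Option M.Act)) ∈ M.aja s ∅ := by
  obtain ⟨σ, hσ⟩ := M.aja_ne s ∅
  have hσn : σ = fun _ => none := by
    funext a
    have := (M.aja_dom s ∅ σ hσ a)
    simp only [Set.mem_empty_iff_false, iff_false] at this
    exact Option.not_isSome_iff_eq_none.mp this
  rwa [hσn] at hσ

lemma restrict_single_mem {M : CGM Agt AP} {s : M.St} {A : Set Agt}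
    {σ : Agt → Option M.Act} (hσ : σ ∈ M.aja s A) {a : Agt} (ha : a ∈ A) :
    restrictJA σ {a} ∈ M.aja s {a} :=
  (M.aja_glue s A σ ⟨a, ha⟩ (M.aja_dom s A σ hσ)).mp hσ a ha

lemma extendJA [Nonempty Agt] (M : CGM Agt AP) (s : M.St) (A : Set Agt)
    (σ : Agt → Option M.Act) (hσ : σ ∈ M.aja s A) :
    ∃ σ' ∈ M.aja s Set.univ, subJA σ σ' := by
  choose τ hτ using fun a => M.aja_ne s {a}
  set σ' : Agt → Option M.Act := fun a => if a ∈ A then σ a else τ a a with hdef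
  have hdom : ∀ a, (σ' a).isSome := by
    intro a
    by_cases h : a ∈ A
    · simp only [hdef, if_pos h]
      exact (M.aja_dom s A σ hσ a).mpr h
    · simp only [hdef, if_neg h]
      exact (M.aja_dom s {a} (τ a) (hτ a) a).mpr rfl
  have hmem : σ' ∈ M.aja s Set.univ := by
    refine (M.aja_glue s Set.univ σ' ⟨Classical.arbitrary Agt, trivial⟩
      (fun a => by simp [hdom a])).mpr ?_
    intro a _
    by_cases ha : a ∈ A
    · have heq : restrictJA σ' {a} = restrictJA σ {a} := by
        funext b
        by_cases hb : b ∈ ({a} : Set Agt)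
        · have hb' : b = a := hb
          subst hb'
          simp [restrictJA, hdef, ha]
        · simp [restrictJA, hb]
      rw [heq]
      exact restrict_single_mem hσ ha
    · have heq : restrictJA σ' {a} = τ a := by
        funext b
        by_cases hb : b ∈ ({a} : Set Agt)
        · have hb' : b = a := hb
          subst hb'
          simp [restrictJA, hdef, ha]
        · have : (τ a b) = none := by
            refine Option.not_isSome_iff_eq_none.mp ?_
            rw [M.aja_dom s {a} (τ a) (hτ a) b]
            exact hb
          simp [restrictJA, hb, this]
      rw [heq]
      exact hτ a
  refine ⟨σ', hmem, ?_⟩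
  intro a x hx
  have ha : a ∈ A := (M.aja_dom s A σ hσ a).mp (by rw [hx]; rfl)
  simp [hdef, ha, hx]

lemma out_nonempty [Nonempty Agt] {M : CGM Agt AP} {s : M.St} {A : Set Agt}
    {σ : Agt → Option M.Act} (hσ : σ ∈ M.aja s A) : (M.out s σ).Nonempty := by
  by_cases hA : A = Set.univ
  · subst hA
    obtain ⟨t, ht⟩ := M.out_univ s σ hσ
    exact ⟨t, by rw [ht]; rfl⟩
  · obtain ⟨σ', hσ', hsub⟩ := extendJA M s A σ hσ
    obtain ⟨t, ht⟩ := M.out_univ s σ' hσ'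
    rw [M.out_glue s A hA σ hσ]
    exact ⟨t, σ', hσ', hsub, by rw [ht]; rfl⟩

lemma uplus_mem {M : CGM Agt AP} {s : M.St} {A B : Set Agt}
    {σA σB : Agt → Option M.Act} (hA : σA ∈ M.aja s A) (hB : σB ∈ M.aja s B) :
    uplusJA A B σA σB ∈ M.aja s (A ∪ B) := by
  have hdom : ∀ a, ((uplusJA A B σA σB) a).isSome ↔ a ∈ A ∪ B := by
    intro a
    by_cases ha : a ∈ A
    · simp [uplusJA, ha, (M.aja_dom s A σA hA a).mpr ha]
    · by_cases hb : a ∈ B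
      · simp [uplusJA, ha, hb, (M.aja_dom s B σB hB a).mpr hb]
      · simp [uplusJA, ha, hb]
  rcases Set.eq_empty_or_nonempty (A ∪ B) with hE | hN
  · have heq : uplusJA A B σA σB = fun _ => none := by
      funext a
      refine Option.not_isSome_iff_eq_none.mp ?_
      rw [hdom a, hE]
      exact id
    rw [hE, heq]
    exact aja_none_mem M s
  · rw [M.aja_glue s (A ∪ B) _ hN hdom]
    intro a ha
    by_cases haA : a ∈ A
    · have heq : restrictJA (uplusJA A B σA σB) {a} = restrictJA σA {a} := by
        funext b
        by_cases hb : b ∈ ({a} : Set Agt)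
        · have hb' : b = a := hb
          subst hb'
          simp [restrictJA, uplusJA, haA]
        · simp [restrictJA, hb]
      rw [heq]
      exact restrict_single_mem hA haA
    · have haB : a ∈ B := ha.resolve_left haA
      have heq : restrictJA (uplusJA A B σA σB) {a} = restrictJA σB {a} := by
        funext b
        by_cases hb : b ∈ ({a} : Set Agt)
        · have hb' : b = a := hb
          subst hb'
          simp [restrictJA, uplusJA, haA, haB]
        · simp [restrictJA, hb]
      rw [heq]
      exact restrict_single_mem hB haB

lemma out_subset {M : CGM Agt AP} {s : M.St} {A A' : Set Agt}
    {σ σ' : Agt → Option M.Act} (hσ : σ ∈ M.aja s A) (hσ' : σ' ∈ M.aja s A')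
    (hsub : subJA σ σ') : M.out s σ' ⊆ M.out s σ := by
  by_cases hA : A = Set.univ
  · have heq : σ = σ' := by
      funext a
      have h1 : (σ a).isSome := (M.aja_dom s A σ hσ a).mpr (hA ▸ trivial)
      obtain ⟨x, hx⟩ := Option.isSome_iff_exists.mp h1
      rw [hx, hsub a x hx]
    rw [heq]
  · rw [M.out_glue s A hA σ hσ]
    by_cases hA' : A' = Set.univ
    · intro t ht
      exact ⟨σ', hA' ▸ hσ', hsub, ht⟩
    · rw [M.out_glue s A' hA' σ' hσ']
      rintro t ⟨τ, hτ, hsub', ht⟩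
      exact ⟨τ, hτ, subJA_trans hsub hsub', ht⟩

lemma subJA_uplus_left {M : CGM Agt AP} {s : M.St} {A : Set Agt} (B : Set Agt)
    {σA : Agt → Option M.Act} (σB : Agt → Option M.Act) (hA : σA ∈ M.aja s A) :
    subJA σA (uplusJA A B σA σB) := by
  intro a x hx
  have ha : a ∈ A := (M.aja_dom s A σA hA a).mp (by rw [hx]; rfl)
  simp [uplusJA, ha, hx]

lemma subJA_uplus_right {M : CGM Agt AP} {s : M.St} {A B : Set Agt}
    (hdis : A ∩ B = ∅) (σA : Agt → Option M.Act)
    {σB : Agt → Option M.Act} (hB : σB ∈ M.aja s B) :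
    subJA σB (uplusJA A B σA σB) := by
  intro a x hx
  have hb : a ∈ B := (M.aja_dom s B σB hB a).mp (by rw [hx]; rfl)
  have hna : a ∉ A := by
    intro ha
    have : a ∈ A ∩ B := ⟨ha, hb⟩
    rw [hdis] at this
    exact this
  simp [uplusJA, hna, hb, hx]

lemma sat_cbox_empty [Nonempty Agt] {M : CGM Agt AP} {s : M.St} {A : Set Agt}
    {φ : FormCLI Agt AP} :
    satCLI M s (FormCLI.cbox A ∅ φ FormCLI.bot) ↔
      ∀ σA ∈ M.aja s A, ∃ t ∈ M.out s σA, satCLI M t φ := by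
  constructor
  · intro h σA hσA
    rcases h σA hσA with h1 | h2
    · exact h1
    · exfalso
      obtain ⟨t, _, hf⟩ := h2 _ (aja_none_mem M s)
      exact hf
  · intro h σA hσA
    exact Or.inl (h σA hσA)

lemma evalCLI_sat {M : CGM Agt AP} {s : M.St} :
    ∀ ξ : FormCLI Agt AP,
      evalCLI (fun p => p ∈ M.lab s) (satCLI M s) ξ ↔ satCLI M s ξ := by
  intro ξ
  induction ξ <;> simp [evalCLI, satCLI, *]

end Aux

/-- Soundness of CCSR_LI: every derivable formula of Φ_CCSR_LI is valid. -/
theorem soundness_CCSR_LI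
    {Agt AP : Type} [Fintype Agt] [Nonempty Agt] [Countable AP]
    (φ : FormCLI Agt AP) (h : DerCLI φ) : validCLI φ := by
  induction h with
  | r1 Γ ψ hder hval ih =>
    intro M s
    refine (evalCLI_sat ψ).mp ?_
    exact hval _ _ (fun φ hφ => (evalCLI_sat φ).mpr (ih φ hφ M s))
  | r2 A φ hder ih =>
    intro M s σA hσA
    left
    obtain ⟨t, ht⟩ := out_nonempty hσA
    exact ⟨t, ht, ih M t⟩
  | r3 A B φ ψ χ hdis hder ih =>
    intro M s
    rcases ih M s with hbig | hχ
    · rw [sat_cbox_empty] at hbig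
      by_cases hφ : satCLI M s (FormCLI.cbox A ∅ φ FormCLI.bot)
      · exact Or.inl hφ
      · refine Or.inr (Or.inl ?_)
        rw [sat_cbox_empty]
        intro σB hσB
        by_contra hcon
        push_neg at hcon
        rw [sat_cbox_empty] at hφ
        push_neg at hφ
        obtain ⟨σA, hσA, hφA⟩ := hφ
        have hmem := uplus_mem hσA hσB
        obtain ⟨t, ht, htsat⟩ := hbig _ hmem
        have htA : t ∈ M.out s σA :=
          out_subset hσA hmem (subJA_uplus_left B σB hσA) ht
        have htB : t ∈ M.out s σB :=
          out_subset hσB hmem (subJA_uplus_right hdis σA hσB) ht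
        rcases htsat with h1 | h2
        · exact hφA t htA h1
        · exact hcon t htB h2
    · exact Or.inr (Or.inr hχ)
  | r4 A B φ ψ χ hder ih =>
    intro M s
    rcases ih M s with hbox | hχ
    · refine Or.inl ?_
      rw [sat_cbox_empty] at hbox
      intro σA hσA
      exact Or.inl (hbox σA hσA)
    · exact Or.inr hχ
  | r5 A B φ ψ χ hder ih =>
    intro M s
    rcases ih M s with hbig | hχ
    · rw [sat_cbox_empty] at hbig
      refine Or.inl ?_
      intro σA hσA
      by_cases hφ : ∃ t ∈ M.out s σA, satCLI M t φ
      · exact Or.inl hφ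
      · push_neg at hφ
        refine Or.inr ?_
        intro σB hσB
        have hmem := uplus_mem hσA hσB
        obtain ⟨t, ht, htsat⟩ := hbig _ hmem
        have htA : t ∈ M.out s σA :=
          out_subset hσA hmem (subJA_uplus_left B σB hσA) ht
        rcases htsat with h1 | h2
        · exact absurd h1 (hφ t htA)
        · exact ⟨t, ht, h2⟩
    · exact Or.inr hχ
end

section
/- Downward validity for CCSR_LI: let γ be an elementary disjunction, NI a finite index set, and for each i ∈ NI let A_i, B_i be coalitions and φ_i, ψ_i ∈ Φ_CCSR_LI, and let SD = γ ∨ ⋁_{i∈NI} [A_i]φ_i[B_i]_c ψ_i. If ⊨ SD, then either (a) ⊨ γ, or (b) there are NI1 ⊆ NI and NI2 ⊆ NI such that (NI1,NI2) is neat and ⊨ ⋁_{i∈NI1} φ_i ∨ ⋁_{i∈NI2} (φ_i ∨ ψ_i) (where the empty disjunction is ⊥). -/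
open scoped Classical

section Aux

variable {Agt AP : Type}

theorem subJA_refl {Act : Type} (σ : Agt → Option Act) : subJA σ σ := fun _ _ h => h

theorem subJA_full_eq {Act : Type} {σ σ' : Agt → Option Act}
    (hfull : ∀ a, (σ a).isSome) (h : subJA σ σ') : σ' = σ := by
  funext a
  obtain ⟨x, hx⟩ := Option.isSome_iff_exists.mp (hfull a)
  rw [hx, h a x hx]

theorem allNone_mem_aja (M : CGM Agt AP) (s : M.St) :
    (fun _ => (none : Option M.Act)) ∈ M.aja s (∅ : Set Agt) := by
  obtain ⟨σ, hσ⟩ := M.aja_ne s ∅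
  have hd := M.aja_dom s ∅ σ hσ
  have : σ = fun _ => none := by
    funext a
    have := hd a
    simp only [Set.mem_empty_iff_false, iff_false] at this
    exact Option.not_isSome_iff_eq_none.mp this
  rwa [this] at hσ

theorem restrict_mem_aja (M : CGM Agt AP) (s : M.St) {A : Set Agt}
    {σ : Agt → Option M.Act} (hσ : σ ∈ M.aja s A) {a : Agt} (ha : a ∈ A) :
    restrictJA σ {a} ∈ M.aja s {a} := by
  have hdom := M.aja_dom s A σ hσ
  exact (M.aja_glue s A σ ⟨a, ha⟩ hdom).mp hσ a ha

theorem uplus_isSome {Act : Type} {A B : Set Agt} {σA σB : Agt → Option Act}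
    (hA : ∀ a, (σA a).isSome ↔ a ∈ A) (hB : ∀ a, (σB a).isSome ↔ a ∈ B) :
    ∀ a, ((uplusJA A B σA σB) a).isSome ↔ a ∈ A ∪ B := by
  intro a
  unfold uplusJA
  by_cases h1 : a ∈ A
  · simp [h1, hA a]
  · by_cases h2 : a ∈ B
    · simp [h1, h2, hB a]
    · simp [h1, h2]

theorem uplus_mem_aja (M : CGM Agt AP) (s : M.St) {A B : Set Agt}
    {σA σB : Agt → Option M.Act} (hA : σA ∈ M.aja s A) (hB : σB ∈ M.aja s B) :
    uplusJA A B σA σB ∈ M.aja s (A ∪ B) := by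
  have hdA := M.aja_dom s A σA hA
  have hdB := M.aja_dom s B σB hB
  have hdom := uplus_isSome hdA hdB
  rcases Set.eq_empty_or_nonempty (A ∪ B) with hAB | hAB
  · have h1 : A = ∅ := Set.subset_eq_empty (Set.subset_union_left) hAB
    have h2 : B = ∅ := Set.subset_eq_empty (Set.subset_union_right) hAB
    have : uplusJA A B σA σB = fun _ => none := by
      funext a
      refine Option.not_isSome_iff_eq_none.mp ?_
      rw [hdom a, hAB]
      simp
    rw [this, hAB]
    exact allNone_mem_aja M s
  · refine (M.aja_glue s (A ∪ B) _ hAB hdom).mpr ?_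
    intro a ha
    by_cases h1 : a ∈ A
    · have : restrictJA (uplusJA A B σA σB) {a} = restrictJA σA {a} := by
        funext a'
        unfold restrictJA uplusJA
        by_cases h : a' ∈ ({a} : Set Agt)
        · have : a' = a := h
          subst this
          simp [h1]
        · simp [h]
      rw [this]
      exact restrict_mem_aja M s hA h1
    · have h2 : a ∈ B := ha.resolve_left h1
      have : restrictJA (uplusJA A B σA σB) {a} = restrictJA σB {a} := by
        funext a'
        unfold restrictJA uplusJA
        by_cases h : a' ∈ ({a} : Set Agt)
        · have : a' = a := h
          subst this
          simp [h1, h2]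
        · simp [h]
      rw [this]
      exact restrict_mem_aja M s hB h2

/-- `out` of any admissible joint action is the union over its full extensions. -/
theorem out_eq_glue (M : CGM Agt AP) (s : M.St) {A : Set Agt}
    {σ : Agt → Option M.Act} (hσ : σ ∈ M.aja s A) :
    M.out s σ = {t | ∃ σ' ∈ M.aja s Set.univ, subJA σ σ' ∧ t ∈ M.out s σ'} := by
  by_cases h : A = Set.univ
  · subst h
    ext u
    constructor
    · intro hu
      exact ⟨σ, hσ, subJA_refl σ, hu⟩
    · rintro ⟨σ', _, hsub, hu⟩
      have hfull : ∀ a, (σ a).isSome := by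
        intro a
        rw [M.aja_dom s _ σ hσ a]
        trivial
      rwa [subJA_full_eq hfull hsub] at hu
  · exact M.out_glue s A h σ hσ

theorem sat_bigOr {M : CGM Agt AP} {s : M.St} {l : List (FormCLI Agt AP)} :
    satCLI M s (bigOrCLI l) ↔ ∃ χ ∈ l, satCLI M s χ := by
  induction l with
  | nil => simp [bigOrCLI, satCLI]
  | cons φ l ih => simp [bigOrCLI, satCLI, ih]

theorem sat_elem_iff {M M' : CGM Agt AP} {s : M.St} {s' : M'.St}
    (hlab : M.lab s = M'.lab s') {γ : FormCLI Agt AP} (hγ : IsElemDisjCLI γ) :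
    satCLI M s γ ↔ satCLI M' s' γ := by
  induction hγ with
  | bot => simp [satCLI]
  | lit h => cases h <;> simp [satCLI, hlab]
  | or _ _ ih1 ih2 => simp [satCLI, ih1, ih2]

end Aux

section Big

variable {Agt AP V κ : Type}
variable (Mc : κ → CGM Agt AP) (sc : ∀ k, (Mc k).St) (L : Set AP)
variable (v0 : V) (sel : (Agt → V) → κ)

/-- States of the combined model: a root plus the disjoint union of components. -/
abbrev BigSt (Mc : κ → CGM Agt AP) := Option (Σ k, (Mc k).St)

/-- Actions of the combined model. -/
abbrev BigAct (V : Type) (Mc : κ → CGM Agt AP) := V × ∀ k, (Mc k).Act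

/-- Project a joint action to component `k`. -/
noncomputable def projJA (k : κ) (σ : Agt → Option (BigAct V Mc)) :
    Agt → Option ((Mc k).Act) :=
  fun a => (σ a).map (fun x => x.2 k)

/-- Vote profile of a (full) joint action at the root. -/
noncomputable def voteOf (σ : Agt → Option (BigAct V Mc)) : Agt → V :=
  fun a => match σ a with
    | some x => x.1
    | none => v0

/-- Lift a component action to a combined action. -/
noncomputable def liftAct (k : κ) (α : (Mc k).Act) : BigAct V Mc :=
  ⟨v0, fun q => if h : q = k then (h.symm ▸ α) else Classical.choice (Mc q).act_ne⟩

noncomputable def liftJA (k : κ) (τ : Agt → Option ((Mc k).Act)) :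
    Agt → Option (BigAct V Mc) :=
  fun a => (τ a).map (liftAct Mc v0 k)

theorem liftAct_proj (k : κ) (α : (Mc k).Act) : (liftAct Mc v0 k α).2 k = α := by
  simp [liftAct]

theorem proj_liftJA (k : κ) (τ : Agt → Option ((Mc k).Act)) :
    projJA Mc k (liftJA Mc v0 k τ) = τ := by
  funext a
  cases h : τ a with
  | none => simp [projJA, liftJA, h]
  | some α => simp [projJA, liftJA, h, liftAct_proj]

/-- Merge: extend σ by lifting τ' where σ is undefined. -/
noncomputable def mergeJA (k : κ) (σ : Agt → Option (BigAct V Mc))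
    (τ' : Agt → Option ((Mc k).Act)) : Agt → Option (BigAct V Mc) :=
  fun a => match σ a with
    | some x => some x
    | none => (τ' a).map (liftAct Mc v0 k)

noncomputable def bigAja : BigSt Mc → Set Agt → Set (Agt → Option (BigAct V Mc)) :=
  fun s A => {σ | (∀ a, (σ a).isSome ↔ a ∈ A) ∧
    match s with
    | none => True
    | some kt => projJA Mc kt.1 σ ∈ (Mc kt.1).aja kt.2 A}

noncomputable def bigF : BigSt Mc → (Agt → Option (BigAct V Mc)) → Set (BigSt Mc) :=
  fun s σ => match s with
  | none => {some ⟨sel (voteOf Mc v0 σ), sc (sel (voteOf Mc v0 σ))⟩}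
  | some kt => (fun u => some ⟨kt.1, u⟩) '' (Mc kt.1).out kt.2 (projJA Mc kt.1 σ)

noncomputable def bigOut : BigSt Mc → (Agt → Option (BigAct V Mc)) → Set (BigSt Mc) :=
  fun s σ => {u | σ ∈ bigAja Mc s {a | (σ a).isSome} ∧
     ∃ σ' ∈ bigAja Mc s Set.univ, subJA σ σ' ∧ u ∈ bigF Mc sc v0 sel s σ'}

theorem subJA_proj (k : κ) {σ σ' : Agt → Option (BigAct V Mc)} (h : subJA σ σ') :
    subJA (projJA Mc k σ) (projJA Mc k σ') := by
  intro a x hx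
  rcases Option.map_eq_some_iff.mp hx with ⟨y, hy, rfl⟩
  simp [projJA, h a y hy]

theorem proj_uplus (k : κ) (A B : Set Agt) (σA σB : Agt → Option (BigAct V Mc)) :
    projJA Mc k (uplusJA A B σA σB) =
      uplusJA A B (projJA Mc k σA) (projJA Mc k σB) := by
  funext a
  unfold projJA uplusJA
  by_cases h1 : a ∈ A
  · simp [h1]
  · by_cases h2 : a ∈ B <;> simp [h1, h2]

theorem bigAja_dom {s : BigSt Mc} {A : Set Agt} {σ : Agt → Option (BigAct V Mc)}
    (h : σ ∈ bigAja Mc s A) : ∀ a, (σ a).isSome ↔ a ∈ A := h.1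

theorem proj_isSome (k : κ) (σ : Agt → Option (BigAct V Mc)) (a : Agt) :
    ((projJA Mc k σ) a).isSome = (σ a).isSome := by
  cases h : σ a <;> simp [projJA, h]

theorem dom_set_eq {Act : Type} {A : Set Agt} {σ : Agt → Option Act}
    (h : ∀ a, (σ a).isSome ↔ a ∈ A) : {a | (σ a).isSome} = A := Set.ext h

theorem mem_bigAja_self {s : BigSt Mc} {A : Set Agt} {σ : Agt → Option (BigAct V Mc)}
    (h : σ ∈ bigAja Mc s A) : σ ∈ bigAja Mc s {a | (σ a).isSome} := by
  rwa [dom_set_eq h.1]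

end Big

section Big2

variable {Agt AP V κ : Type}
variable (Mc : κ → CGM Agt AP) (sc : ∀ k, (Mc k).St) (L : Set AP)
variable (v0 : V) (sel : (Agt → V) → κ)

theorem liftJA_mem {k : κ} {t : (Mc k).St} {A : Set Agt}
    {τ : Agt → Option ((Mc k).Act)} (hτ : τ ∈ (Mc k).aja t A) :
    liftJA Mc v0 k τ ∈ bigAja Mc (some ⟨k, t⟩) A := by
  constructor
  · intro a
    have := (Mc k).aja_dom t A τ hτ a
    cases h : τ a <;> simp [liftJA, h] <;> simp [h] at this <;> tauto
  · show projJA Mc k (liftJA Mc v0 k τ) ∈ (Mc k).aja t A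
    rwa [proj_liftJA]

theorem mergeJA_spec {k : κ} {σ : Agt → Option (BigAct V Mc)}
    {τ' : Agt → Option ((Mc k).Act)}
    (hfull : ∀ a, (τ' a).isSome) (hsub : subJA (projJA Mc k σ) τ') :
    subJA σ (mergeJA Mc v0 k σ τ') ∧ projJA Mc k (mergeJA Mc v0 k σ τ') = τ' ∧
      (∀ a, ((mergeJA Mc v0 k σ τ') a).isSome) := by
  refine ⟨?_, ?_, ?_⟩
  · intro a x hx
    simp [mergeJA, hx]
  · funext a
    cases h : σ a with
    | some x =>
        have h1 : (projJA Mc k σ) a = some (x.2 k) := by simp [projJA, h]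
        have h2 := hsub a _ h1
        simp [mergeJA, projJA, h, h2]
    | none =>
        obtain ⟨y, hy⟩ := Option.isSome_iff_exists.mp (hfull a)
        simp [mergeJA, projJA, h, hy, liftAct_proj]
  · intro a
    cases h : σ a with
    | some x => simp [mergeJA, h]
    | none =>
        obtain ⟨y, hy⟩ := Option.isSome_iff_exists.mp (hfull a)
        simp [mergeJA, h, hy]

/-- The combined model. -/
noncomputable def bigM : CGM Agt AP where
  St := BigSt Mc
  Act := BigAct V Mc
  st_ne := ⟨none⟩
  act_ne := ⟨⟨v0, fun k => Classical.choice (Mc k).act_ne⟩⟩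
  aja := bigAja Mc
  out := bigOut Mc sc v0 sel
  lab := fun s => match s with
    | none => L
    | some kt => (Mc kt.1).lab kt.2
  aja_ne := by
    intro s A
    cases s with
    | none =>
        refine ⟨fun a => if a ∈ A then some ⟨v0, fun k => Classical.choice (Mc k).act_ne⟩
          else none, ?_, trivial⟩
        intro a
        by_cases h : a ∈ A <;> simp [h]
    | some kt =>
        obtain ⟨τ, hτ⟩ := (Mc kt.1).aja_ne kt.2 A
        exact ⟨liftJA Mc v0 kt.1 τ, liftJA_mem Mc v0 hτ⟩
  aja_dom := by
    intro s A σ h a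
    exact h.1 a
  aja_glue := by
    intro s A σ hA hdom
    have hrdom : ∀ a ∈ A, ∀ a', ((restrictJA σ {a}) a').isSome ↔ a' ∈ ({a} : Set Agt) := by
      intro a ha a'
      unfold restrictJA
      by_cases h : a' ∈ ({a} : Set Agt)
      · have : a' = a := h
        subst this
        simp [h, (hdom a').mpr ha]
      · simp [h]
    cases s with
    | none =>
        constructor
        · intro _ a ha
          exact ⟨hrdom a ha, trivial⟩
        · intro _
          exact ⟨hdom, trivial⟩
    | some kt =>
        constructor
        · rintro ⟨_, hmem⟩ a ha
          refine ⟨hrdom a ha, ?_⟩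
          have hpd : ∀ a', ((projJA Mc kt.1 σ) a').isSome ↔ a' ∈ A := by
            intro a'
            rw [proj_isSome]
            exact hdom a'
          have := ((Mc kt.1).aja_glue kt.2 A (projJA Mc kt.1 σ) hA hpd).mp hmem a ha
          have hcomm : projJA Mc kt.1 (restrictJA σ {a}) =
              restrictJA (projJA Mc kt.1 σ) {a} := by
            funext a'
            unfold projJA restrictJA
            by_cases h : a' ∈ ({a} : Set Agt) <;> simp [h]
          show projJA Mc kt.1 (restrictJA σ {a}) ∈ (Mc kt.1).aja kt.2 {a}
          rwa [hcomm]
        · intro h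
          refine ⟨hdom, ?_⟩
          have hpd : ∀ a', ((projJA Mc kt.1 σ) a').isSome ↔ a' ∈ A := by
            intro a'
            rw [proj_isSome]
            exact hdom a'
          refine ((Mc kt.1).aja_glue kt.2 A (projJA Mc kt.1 σ) hA hpd).mpr ?_
          intro a ha
          have h2 : projJA Mc kt.1 (restrictJA σ {a}) ∈ (Mc kt.1).aja kt.2 {a} :=
            (h a ha).2
          have hcomm : projJA Mc kt.1 (restrictJA σ {a}) =
              restrictJA (projJA Mc kt.1 σ) {a} := by
            funext a'
            unfold projJA restrictJA
            by_cases hh : a' ∈ ({a} : Set Agt) <;> simp [hh]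
          rwa [hcomm] at h2
  out_univ := by
    intro s σ hσ
    have hfull : ∀ a, (σ a).isSome := by
      intro a
      rw [hσ.1 a]
      trivial
    have hout : bigOut Mc sc v0 sel s σ = bigF Mc sc v0 sel s σ := by
      ext u
      constructor
      · rintro ⟨_, σ', _, hsub, hu⟩
        rwa [subJA_full_eq hfull hsub] at hu
      · intro hu
        exact ⟨mem_bigAja_self Mc hσ, σ, hσ, subJA_refl σ, hu⟩
    cases s with
    | none => exact ⟨_, hout⟩
    | some kt =>
        obtain ⟨t', ht'⟩ := (Mc kt.1).out_univ kt.2 (projJA Mc kt.1 σ) hσ.2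
        refine ⟨some ⟨kt.1, t'⟩, ?_⟩
        rw [hout]
        have : bigF Mc sc v0 sel (some kt) σ =
            (fun u => some ⟨kt.1, u⟩) '' (Mc kt.1).out kt.2 (projJA Mc kt.1 σ) := rfl
        rw [this, ht']
        simp
  out_univ_not := by
    intro s σ hfull hσ
    ext u
    simp only [bigOut, Set.mem_setOf_eq, Set.mem_empty_iff_false, iff_false, not_and]
    intro hmem
    exfalso
    apply hσ
    have : {a | (σ a).isSome} = Set.univ := by
      ext a
      simp [hfull a]
    rwa [this] at hmem
  out_glue := by
    intro s A hA σ hσ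
    have hd : {a | (σ a).isSome} = A := dom_set_eq hσ.1
    ext u
    constructor
    · rintro ⟨_, σ', hσ', hsub, hu⟩
      refine ⟨σ', hσ', hsub, ?_⟩
      have hfull' : ∀ a, (σ' a).isSome := by
        intro a
        rw [hσ'.1 a]
        trivial
      exact ⟨mem_bigAja_self Mc hσ', σ', hσ', subJA_refl σ', hu⟩
    · rintro ⟨σ', hσ', hsub, _, σ'', hσ'', hsub', hu⟩
      have hfull' : ∀ a, (σ' a).isSome := by
        intro a
        rw [hσ'.1 a]
        trivial
      rw [subJA_full_eq hfull' hsub'] at hu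
      exact ⟨mem_bigAja_self Mc hσ, σ', hσ', hsub, hu⟩
  out_not := by
    intro s A σ hdom hA hσ
    ext u
    simp only [bigOut, Set.mem_setOf_eq, Set.mem_empty_iff_false, iff_false, not_and]
    intro hmem
    exfalso
    apply hσ
    rwa [dom_set_eq hdom] at hmem

end Big2

section Big3

variable {Agt AP V κ : Type}
variable (Mc : κ → CGM Agt AP) (sc : ∀ k, (Mc k).St) (L : Set AP)
variable (v0 : V) (sel : (Agt → V) → κ)

theorem bigM_aja_eq : (bigM Mc sc L v0 sel).aja = bigAja Mc := rfl
theorem bigM_out_eq : (bigM Mc sc L v0 sel).out = bigOut Mc sc v0 sel := rfl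

theorem bigOut_comp {k : κ} {t : (Mc k).St} {A : Set Agt}
    {σ : Agt → Option (BigAct V Mc)} (hσ : σ ∈ bigAja Mc (some ⟨k, t⟩) A) :
    bigOut Mc sc v0 sel (some ⟨k, t⟩) σ =
      (fun u => some ⟨k, u⟩) '' (Mc k).out t (projJA Mc k σ) := by
  have hproj : projJA Mc k σ ∈ (Mc k).aja t A := hσ.2
  have hMout := out_eq_glue (Mc k) t hproj
  ext u
  constructor
  · rintro ⟨_, σ', hσ', hsub, hu⟩
    have hF : bigF Mc sc v0 sel (some ⟨k, t⟩) σ' =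
        (fun u => some ⟨k, u⟩) '' (Mc k).out t (projJA Mc k σ') := rfl
    rw [hF] at hu
    rcases hu with ⟨u', hu', rfl⟩
    refine ⟨u', ?_, rfl⟩
    rw [hMout]
    exact ⟨projJA Mc k σ', hσ'.2, subJA_proj Mc k hsub, hu'⟩
  · rintro ⟨u', hu', rfl⟩
    rw [hMout] at hu'
    rcases hu' with ⟨τ', hτ', hsub', hu'⟩
    have hτfull : ∀ a, (τ' a).isSome := by
      intro a
      rw [(Mc k).aja_dom t _ τ' hτ' a]
      trivial
    obtain ⟨hsubm, hprojm, hfullm⟩ := mergeJA_spec Mc v0 hτfull hsub'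
    refine ⟨mem_bigAja_self Mc hσ, mergeJA Mc v0 k σ τ', ⟨?_, ?_⟩, hsubm, ?_⟩
    · intro a
      simp [hfullm a]
    · show projJA Mc k (mergeJA Mc v0 k σ τ') ∈ (Mc k).aja t Set.univ
      rwa [hprojm]
    · have hF : bigF Mc sc v0 sel (some ⟨k, t⟩) (mergeJA Mc v0 k σ τ') =
          (fun u => some ⟨k, u⟩) '' (Mc k).out t (projJA Mc k (mergeJA Mc v0 k σ τ')) := rfl
      rw [hF, hprojm]
      exact ⟨u', hu', rfl⟩

/-- Truth lemma: satisfaction in a component of the big model agrees with the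
component model. -/
theorem bigM_truth (k : κ) (χ : FormCLI Agt AP) :
    ∀ t : (Mc k).St,
      satCLI (bigM Mc sc L v0 sel) (some ⟨k, t⟩) χ ↔ satCLI (Mc k) t χ := by
  induction χ with
  | top => intro t; simp [satCLI]
  | bot => intro t; simp [satCLI]
  | atom p => intro t; simp [satCLI]; rfl
  | natom p => intro t; simp only [satCLI]; rfl
  | and φ ψ ihφ ihψ => intro t; simp only [satCLI, ihφ t, ihψ t]
  | or φ ψ ihφ ihψ => intro t; simp only [satCLI, ihφ t, ihψ t]
  | cbox A B φ ψ ihφ ihψ =>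
    intro t
    simp only [satCLI]
    constructor
    · intro h τA hτA
      have hlA := liftJA_mem Mc v0 hτA
      rcases h (liftJA Mc v0 k τA) hlA with h1 | h2
      · left
        rcases h1 with ⟨u, hu, hφ⟩
        rw [bigM_out_eq, bigOut_comp Mc sc v0 sel hlA, proj_liftJA] at hu
        rcases hu with ⟨u', hu', rfl⟩
        exact ⟨u', hu', (ihφ u').mp hφ⟩
      · right
        intro τB hτB
        have hlB := liftJA_mem Mc v0 hτB
        rcases h2 (liftJA Mc v0 k τB) hlB with ⟨u, hu, hψ⟩
        have hup : uplusJA A B (liftJA Mc v0 k τA) (liftJA Mc v0 k τB) ∈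
            bigAja Mc (some ⟨k, t⟩) (A ∪ B) :=
          uplus_mem_aja (bigM Mc sc L v0 sel) (some ⟨k, t⟩) hlA hlB
        erw [bigM_out_eq, bigOut_comp Mc sc v0 sel hup, proj_uplus, proj_liftJA,
          proj_liftJA] at hu
        rcases hu with ⟨u', hu', rfl⟩
        exact ⟨u', hu', (ihψ u').mp hψ⟩
    · intro h σA hσA
      have hτA : projJA Mc k σA ∈ (Mc k).aja t A := hσA.2
      rcases h (projJA Mc k σA) hτA with h1 | h2
      · left
        rcases h1 with ⟨u', hu', hφ⟩
        refine ⟨some ⟨k, u'⟩, ?_, (ihφ u').mpr hφ⟩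
        rw [bigM_out_eq, bigOut_comp Mc sc v0 sel hσA]
        exact ⟨u', hu', rfl⟩
      · right
        intro σB hσB
        rcases h2 (projJA Mc k σB) hσB.2 with ⟨u', hu', hψ⟩
        have hup : uplusJA A B σA σB ∈ bigAja Mc (some ⟨k, t⟩) (A ∪ B) :=
          uplus_mem_aja (bigM Mc sc L v0 sel) (some ⟨k, t⟩) hσA hσB
        refine ⟨some ⟨k, u'⟩, ?_, (ihψ u').mpr hψ⟩
        erw [bigM_out_eq, bigOut_comp Mc sc v0 sel hup, proj_uplus]
        exact ⟨u', hu', rfl⟩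

theorem bigM_lab_none : (bigM Mc sc L v0 sel).lab none = L := rfl

/-- Outcomes at the root. -/
theorem bigOut_root {A : Set Agt} {σ : Agt → Option (BigAct V Mc)}
    (hσ : σ ∈ bigAja Mc (none : BigSt Mc) A) :
    bigOut Mc sc v0 sel none σ =
      {u | ∃ σ' ∈ bigAja Mc (none : BigSt Mc) Set.univ, subJA σ σ' ∧
        u = some ⟨sel (voteOf Mc v0 σ'), sc (sel (voteOf Mc v0 σ'))⟩} := by
  ext u
  constructor
  · rintro ⟨_, σ', hσ', hsub, hu⟩
    have hF : bigF Mc sc v0 sel none σ' =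
        {some ⟨sel (voteOf Mc v0 σ'), sc (sel (voteOf Mc v0 σ'))⟩} := rfl
    rw [hF] at hu
    exact ⟨σ', hσ', hsub, hu⟩
  · rintro ⟨σ', hσ', hsub, rfl⟩
    exact ⟨mem_bigAja_self Mc hσ, σ', hσ', hsub, rfl⟩

end Big3

section Main

variable {Agt AP : Type} {ι : Type} [DecidableEq ι]
variable (NI : Finset ι) (A B : ι → Set Agt)

/-- Neat pairs of subsets of `NI`. -/
def NeatPair : Type :=
  {q : Finset ι × Finset ι // q.1 ⊆ NI ∧ q.2 ⊆ NI ∧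
    (∀ i ∈ q.1, ∀ i' ∈ q.1, i ≠ i' → A i ∩ A i' = ∅) ∧
    (∀ i ∈ q.2, ∀ i' ∈ q.2, i ≠ i' → (A i ∪ B i) ∩ (A i' ∪ B i') = ∅) ∧
    (∀ i ∈ q.1, ∀ i' ∈ q.2, i ≠ i' → A i ∩ (A i' ∪ B i') = ∅)}

variable (φ ψ : ι → FormCLI Agt AP)

noncomputable def DForm (p : NeatPair NI A B) : FormCLI Agt AP :=
  FormCLI.or (bigOrCLI (p.1.1.toList.map fun i => φ i))
    (bigOrCLI (p.1.2.toList.map fun i => FormCLI.or (φ i) (ψ i)))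

/-- From a vote profile, compute the induced neat pair. -/
noncomputable def selPair (vp : Agt → Option (ι × Bool)) : NeatPair NI A B := by
  refine ⟨(NI.filter (fun i => ∀ a ∈ A i, vp a = some (i, true)),
    NI.filter (fun i => ∀ a ∈ A i ∪ B i, ∃ b, vp a = some (i, b))),
    Finset.filter_subset _ _, Finset.filter_subset _ _, ?_, ?_, ?_⟩
  · intro i hi i' hi' hne
    rw [Finset.mem_filter] at hi hi'
    refine Set.eq_empty_iff_forall_notMem.mpr ?_
    rintro a ⟨ha, ha'⟩
    have e1 := hi.2 a ha
    have e2 := hi'.2 a ha'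
    rw [e1] at e2
    simp only [Option.some.injEq, Prod.mk.injEq] at e2
    exact hne e2.1
  · intro i hi i' hi' hne
    rw [Finset.mem_filter] at hi hi'
    refine Set.eq_empty_iff_forall_notMem.mpr ?_
    rintro a ⟨ha, ha'⟩
    obtain ⟨b, e1⟩ := hi.2 a ha
    obtain ⟨b', e2⟩ := hi'.2 a ha'
    rw [e1] at e2
    simp only [Option.some.injEq, Prod.mk.injEq] at e2
    exact hne e2.1
  · intro i hi i' hi' hne
    rw [Finset.mem_filter] at hi hi'
    refine Set.eq_empty_iff_forall_notMem.mpr ?_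
    rintro a ⟨ha, ha'⟩
    have e1 := hi.2 a ha
    obtain ⟨b', e2⟩ := hi'.2 a ha'
    rw [e1] at e2
    simp only [Option.some.injEq, Prod.mk.injEq] at e2
    exact hne e2.1

end Main

set_option linter.unusedSectionVars false

section Sel

variable {Agt AP : Type} {ι : Type} [DecidableEq ι]
variable (NI : Finset ι) (A B : ι → Set Agt)

noncomputable def sel1 (vp : Agt → Option (ι × Bool)) : Finset ι :=
  NI.filter (fun i => ∀ a ∈ A i, vp a = some (i, true))

noncomputable def sel2 (vp : Agt → Option (ι × Bool)) : Finset ι :=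
  NI.filter (fun i => ∀ a ∈ A i ∪ B i, ∃ b, vp a = some (i, b))

noncomputable def selPair' (vp : Agt → Option (ι × Bool)) : NeatPair NI A B :=
  ⟨(sel1 NI A vp, sel2 NI A B vp), by
    refine ⟨Finset.filter_subset _ _, Finset.filter_subset _ _, ?_, ?_, ?_⟩
    · intro i hi i' hi' hne
      rw [sel1, Finset.mem_filter] at hi hi'
      refine Set.eq_empty_iff_forall_notMem.mpr ?_
      rintro a ⟨ha, ha'⟩
      have e1 := hi.2 a ha
      have e2 := hi'.2 a ha'
      rw [e1] at e2
      simp only [Option.some.injEq, Prod.mk.injEq] at e2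
      exact hne e2.1
    · intro i hi i' hi' hne
      rw [sel2, Finset.mem_filter] at hi hi'
      refine Set.eq_empty_iff_forall_notMem.mpr ?_
      rintro a ⟨ha, ha'⟩
      obtain ⟨b, e1⟩ := hi.2 a ha
      obtain ⟨b', e2⟩ := hi'.2 a ha'
      rw [e1] at e2
      simp only [Option.some.injEq, Prod.mk.injEq] at e2
      exact hne e2.1
    · intro i hi i' hi' hne
      rw [sel1, Finset.mem_filter] at hi
      rw [sel2, Finset.mem_filter] at hi'
      refine Set.eq_empty_iff_forall_notMem.mpr ?_
      rintro a ⟨ha, ha'⟩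
      have e1 := hi.2 a ha
      obtain ⟨b', e2⟩ := hi'.2 a ha'
      rw [e1] at e2
      simp only [Option.some.injEq, Prod.mk.injEq] at e2
      exact hne e2.1⟩

theorem selPair'_fst (vp : Agt → Option (ι × Bool)) :
    (selPair' NI A B vp).1.1 = sel1 NI A vp := rfl

theorem selPair'_snd (vp : Agt → Option (ι × Bool)) :
    (selPair' NI A B vp).1.2 = sel2 NI A B vp := rfl

theorem mem_sel1 (vp : Agt → Option (ι × Bool)) (i : ι) :
    i ∈ sel1 NI A vp ↔ i ∈ NI ∧ ∀ a ∈ A i, vp a = some (i, true) := by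
  rw [sel1]
  exact Finset.mem_filter

theorem mem_sel2 (vp : Agt → Option (ι × Bool)) (i : ι) :
    i ∈ sel2 NI A B vp ↔ i ∈ NI ∧ ∀ a ∈ A i ∪ B i, ∃ b, vp a = some (i, b) := by
  rw [sel2]
  exact Finset.mem_filter

end Sel

/-- Downward validity for CCSR_LI: if a standard disjunction
γ ∨ ⋁_{i∈NI}[A_i]φ_i[B_i]_c ψ_i is valid, then γ is valid, or there is a neat pair
(NI1,NI2) of subsets of NI with ⋁_{i∈NI1}φ_i ∨ ⋁_{i∈NI2}(φ_i ∨ ψ_i) valid. -/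
theorem downward_validity_CCSR_LI
    {Agt AP : Type} [Fintype Agt] [Nonempty Agt] [Countable AP]
    {ι : Type} [DecidableEq ι]
    (γ : FormCLI Agt AP) (hγ : IsElemDisjCLI γ)
    (NI : Finset ι) (A B : ι → Set Agt) (φ ψ : ι → FormCLI Agt AP)
    (hval : validCLI (FormCLI.or γ
      (bigOrCLI (NI.toList.map fun i => FormCLI.cbox (A i) (B i) (φ i) (ψ i))))) :
    validCLI γ ∨
      ∃ NI1 ⊆ NI, ∃ NI2 ⊆ NI,
        (∀ i ∈ NI1, ∀ i' ∈ NI1, i ≠ i' → A i ∩ A i' = ∅) ∧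
        (∀ i ∈ NI2, ∀ i' ∈ NI2, i ≠ i' → (A i ∪ B i) ∩ (A i' ∪ B i') = ∅) ∧
        (∀ i ∈ NI1, ∀ i' ∈ NI2, i ≠ i' → A i ∩ (A i' ∪ B i') = ∅) ∧
        validCLI (FormCLI.or
          (bigOrCLI (NI1.toList.map fun i => φ i))
          (bigOrCLI (NI2.toList.map fun i => FormCLI.or (φ i) (ψ i)))) := by
  by_contra hcon
  push_neg at hcon
  obtain ⟨h1, h2⟩ := hcon
  unfold validCLI at h1
  push_neg at h1
  obtain ⟨M0, s0, hs0⟩ := h1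
  have hbad : ∀ p : NeatPair NI A B, ∃ (M : CGM Agt AP) (s : M.St),
      ¬ satCLI M s (DForm NI A B φ ψ p) := by
    rintro ⟨⟨N1, N2⟩, hsub1, hsub2, c1, c2, c3⟩
    have h3 := h2 N1 hsub1 N2 hsub2 c1 c2 c3
    unfold validCLI at h3
    push_neg at h3
    exact h3
  choose Mc sc hc using hbad
  have hsat := hval
    (bigM Mc sc (M0.lab s0) (none : Option (ι × Bool)) (selPair' NI A B)) none
  simp only [satCLI] at hsat
  rcases hsat with hγ' | hbig
  · exact hs0 ((sat_elem_iff
      (M := bigM Mc sc (M0.lab s0) (none : Option (ι × Bool)) (selPair' NI A B))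
      (M' := M0) (s := none) (s' := s0) rfl hγ).mp hγ')
  erw [sat_bigOr] at hbig
  obtain ⟨χ, hχmem, hχ⟩ := hbig
  rw [List.mem_map] at hχmem
  obtain ⟨i, hiNI, rfl⟩ := hχmem
  rw [Finset.mem_toList] at hiNI
  simp only [satCLI] at hχ
  set dflt : ∀ k : NeatPair NI A B, (Mc k).Act := fun k => Classical.choice (Mc k).act_ne
    with hdflt
  set σA : Agt → Option (BigAct (Option (ι × Bool)) Mc) :=
    fun a => if a ∈ A i then some ⟨some (i, true), dflt⟩ else none with hσAdef
  have hσA : σA ∈ bigAja Mc (none : BigSt Mc) (A i) := by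
    refine ⟨?_, trivial⟩
    intro a
    by_cases h : a ∈ A i <;> simp [hσAdef, h]
  rcases hχ σA hσA with hcase1 | hcase2
  · obtain ⟨u, hu, hφu⟩ := hcase1
    rw [bigM_out_eq,
      bigOut_root Mc sc (none : Option (ι × Bool)) (selPair' NI A B) hσA] at hu
    obtain ⟨σ', hσ', hsub, rfl⟩ := hu
    set p := selPair' NI A B (voteOf Mc none σ') with hp
    have hi1 : i ∈ p.1.1 := by
      rw [hp, selPair'_fst, mem_sel1]
      refine ⟨hiNI, ?_⟩
      intro a ha
      have hx : σA a = some ⟨some (i, true), dflt⟩ := by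
        rw [hσAdef]
        simp [ha]
      have hx' := hsub a _ hx
      unfold voteOf
      rw [hx']
    have hφ' : satCLI (Mc p) (sc p) (φ i) :=
      (bigM_truth Mc sc (M0.lab s0) (none : Option (ι × Bool)) (selPair' NI A B)
        p (φ i) (sc p)).mp hφu
    apply hc p
    simp only [DForm, satCLI]
    left
    rw [sat_bigOr]
    exact ⟨φ i, List.mem_map.mpr ⟨i, Finset.mem_toList.mpr hi1, rfl⟩, hφ'⟩
  · set σB : Agt → Option (BigAct (Option (ι × Bool)) Mc) :=
      fun a => if a ∈ B i then some ⟨some (i, false), dflt⟩ else none with hσBdef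
    have hσB : σB ∈ bigAja Mc (none : BigSt Mc) (B i) := by
      refine ⟨?_, trivial⟩
      intro a
      by_cases h : a ∈ B i <;> simp [hσBdef, h]
    obtain ⟨u, hu, hψu⟩ := hcase2 σB hσB
    have hup : uplusJA (A i) (B i) σA σB ∈ bigAja Mc (none : BigSt Mc) (A i ∪ B i) :=
      uplus_mem_aja (bigM Mc sc (M0.lab s0) (none : Option (ι × Bool)) (selPair' NI A B))
        none hσA hσB
    erw [bigM_out_eq,
      bigOut_root Mc sc (none : Option (ι × Bool)) (selPair' NI A B) hup] at hu
    obtain ⟨σ', hσ', hsub, rfl⟩ := hu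
    set p := selPair' NI A B (voteOf Mc none σ') with hp
    have hi2 : i ∈ p.1.2 := by
      rw [hp, selPair'_snd, mem_sel2]
      refine ⟨hiNI, ?_⟩
      intro a ha
      by_cases haA : a ∈ A i
      · have hx : uplusJA (A i) (B i) σA σB a = some ⟨some (i, true), dflt⟩ := by
          rw [hσAdef]
          simp [uplusJA, haA]
        have hx' := hsub a _ hx
        refine ⟨true, ?_⟩
        unfold voteOf
        rw [hx']
      · have haB : a ∈ B i := ha.resolve_left haA
        have hx : uplusJA (A i) (B i) σA σB a = some ⟨some (i, false), dflt⟩ := by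
          rw [hσBdef]
          simp [uplusJA, haA, haB]
        have hx' := hsub a _ hx
        refine ⟨false, ?_⟩
        unfold voteOf
        rw [hx']
    have hψ' : satCLI (Mc p) (sc p) (ψ i) :=
      (bigM_truth Mc sc (M0.lab s0) (none : Option (ι × Bool)) (selPair' NI A B)
        p (ψ i) (sc p)).mp hψu
    apply hc p
    simp only [DForm, satCLI]
    right
    rw [sat_bigOr]
    refine ⟨FormCLI.or (φ i) (ψ i),
      List.mem_map.mpr ⟨i, Finset.mem_toList.mpr hi2, rfl⟩, ?_⟩
    simp only [satCLI]
    exact Or.inr hψ'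
end

section
/- Upward derivability for CCSR_LI: let γ be an elementary disjunction, NI a finite index set, and for each i ∈ NI let A_i, B_i be coalitions and φ_i, ψ_i ∈ Φ_CCSR_LI, and let SD = γ ∨ ⋁_{i∈NI} [A_i]φ_i[B_i]_c ψ_i. If either (a) ⊢_CCSR_LI γ, or (b) there are NI1 ⊆ NI and NI2 ⊆ NI such that (NI1,NI2) is neat and ⊢_CCSR_LI ⋁_{i∈NI1} φ_i ∨ ⋁_{i∈NI2} (φ_i ∨ ψ_i), then ⊢_CCSR_LI SD. -/
open scoped Classical

section UpAuxCLI

variable {Agt AP : Type}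

/-- Item: (coalition for splitting, formula for splitting, target box formula). -/
abbrev ItemCLI (Agt AP : Type) := Set Agt × FormCLI Agt AP × FormCLI Agt AP

def foldOrCLI (χ : FormCLI Agt AP) : List (FormCLI Agt AP) → FormCLI Agt AP
  | [] => χ
  | f :: l => FormCLI.or f (foldOrCLI χ l)

lemma derCLI_mono {φ ψ : FormCLI Agt AP} (h : DerCLI φ)
    (himp : ∀ v w, evalCLI v w φ → evalCLI v w ψ) : DerCLI ψ :=
  DerCLI.r1 [φ] ψ (by simpa using h) (fun v w hall => himp v w (hall φ (by simp)))

lemma eval_or_CLI (v : AP → Prop) (w : FormCLI Agt AP → Prop) (a b : FormCLI Agt AP) :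
    evalCLI v w (FormCLI.or a b) ↔ evalCLI v w a ∨ evalCLI v w b := Iff.rfl

lemma eval_foldOrCLI (v : AP → Prop) (w : FormCLI Agt AP → Prop) (χ : FormCLI Agt AP) :
    ∀ l, evalCLI v w (foldOrCLI χ l) ↔ (∃ f ∈ l, evalCLI v w f) ∨ evalCLI v w χ
  | [] => by simp [foldOrCLI]
  | f :: l => by
      rw [foldOrCLI, eval_or_CLI, eval_foldOrCLI v w χ l]
      constructor
      · rintro (h | ⟨⟨g, hg, h⟩ | h⟩)
        · exact Or.inl ⟨f, List.mem_cons_self, h⟩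
        · exact Or.inl ⟨g, List.mem_cons_of_mem _ hg, h⟩
        · exact Or.inr h
      · rintro (⟨g, hg, h⟩ | h)
        · rcases List.mem_cons.mp hg with rfl | hg
          · exact Or.inl h
          · exact Or.inr (Or.inl ⟨g, hg, h⟩)
        · exact Or.inr (Or.inr h)

lemma eval_bigOrCLI (v : AP → Prop) (w : FormCLI Agt AP → Prop) :
    ∀ l : List (FormCLI Agt AP), evalCLI v w (bigOrCLI l) ↔ ∃ f ∈ l, evalCLI v w f
  | [] => by simp [bigOrCLI, evalCLI]
  | f :: l => by
      rw [bigOrCLI, eval_or_CLI, eval_bigOrCLI v w l]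
      constructor
      · rintro (h | ⟨g, hg, h⟩)
        · exact ⟨f, List.mem_cons_self, h⟩
        · exact ⟨g, List.mem_cons_of_mem _ hg, h⟩
      · rintro ⟨g, hg, h⟩
        rcases List.mem_cons.mp hg with rfl | hg
        · exact Or.inl h
        · exact Or.inr ⟨g, hg, h⟩

/-- Commute the head of a χ-terminated disjunction. -/
lemma eval_commA (v : AP → Prop) (w : FormCLI Agt AP → Prop) (b χ : FormCLI Agt AP)
    (m : List (FormCLI Agt AP)) (h : evalCLI v w (foldOrCLI (FormCLI.or b χ) m)) :
    evalCLI v w (FormCLI.or b (foldOrCLI χ m)) := by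
  rw [eval_foldOrCLI] at h
  rw [eval_or_CLI, eval_foldOrCLI]
  rcases h with h | h
  · exact Or.inr (Or.inl h)
  · rcases (eval_or_CLI v w b χ).mp h with h | h
    · exact Or.inl h
    · exact Or.inr (Or.inr h)

lemma eval_commB (v : AP → Prop) (w : FormCLI Agt AP → Prop) (b χ : FormCLI Agt AP)
    (m : List (FormCLI Agt AP)) (h : evalCLI v w (FormCLI.or b (foldOrCLI χ m))) :
    evalCLI v w (foldOrCLI (FormCLI.or b χ) m) := by
  rw [eval_or_CLI, eval_foldOrCLI] at h
  rw [eval_foldOrCLI]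
  rcases h with h | h | h
  · exact Or.inr ((eval_or_CLI v w b χ).mpr (Or.inl h))
  · exact Or.inl h
  · exact Or.inr ((eval_or_CLI v w b χ).mpr (Or.inr h))

def unionCLI : List (ItemCLI Agt AP) → Set Agt
  | [] => ∅
  | [e] => e.1
  | e :: f :: l => e.1 ∪ unionCLI (f :: l)

def bigThetaCLI : List (ItemCLI Agt AP) → FormCLI Agt AP
  | [] => FormCLI.bot
  | [e] => e.2.1
  | e :: f :: l => FormCLI.or e.2.1 (bigThetaCLI (f :: l))

lemma mem_unionCLI : ∀ (l : List (ItemCLI Agt AP)) (x : Agt),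
    x ∈ unionCLI l → ∃ e ∈ l, x ∈ e.1
  | [], x => by simp [unionCLI]
  | [e], x => fun h => ⟨e, List.mem_cons_self, h⟩
  | e :: f :: l, x => by
      intro h
      rcases h with h | h
      · exact ⟨e, List.mem_cons_self, h⟩
      · obtain ⟨q, hq, hx⟩ := mem_unionCLI (f :: l) x h
        exact ⟨q, List.mem_cons_of_mem _ hq, hx⟩

lemma eval_bigThetaCLI (v : AP → Prop) (w : FormCLI Agt AP → Prop) :
    ∀ l : List (ItemCLI Agt AP), evalCLI v w (bigThetaCLI l) ↔ ∃ e ∈ l, evalCLI v w e.2.1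
  | [] => by simp [bigThetaCLI, evalCLI]
  | [e] => by simp [bigThetaCLI]
  | e :: f :: l => by
      rw [bigThetaCLI, eval_or_CLI, eval_bigThetaCLI v w (f :: l)]
      constructor
      · rintro (h | ⟨g, hg, h⟩)
        · exact ⟨e, List.mem_cons_self, h⟩
        · exact ⟨g, List.mem_cons_of_mem _ hg, h⟩
      · rintro ⟨g, hg, h⟩
        rcases List.mem_cons.mp hg with rfl | hg
        · exact Or.inl h
        · exact Or.inr ⟨g, hg, h⟩

lemma splitCLI : ∀ (l : List (ItemCLI Agt AP)),
    l ≠ [] → l.Pairwise (fun p q => p.1 ∩ q.1 = ∅) →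
    ∀ χ : FormCLI Agt AP,
    DerCLI (FormCLI.or (FormCLI.cbox (unionCLI l) ∅ (bigThetaCLI l) FormCLI.bot) χ) →
    DerCLI (foldOrCLI χ (l.map fun e => FormCLI.cbox e.1 ∅ e.2.1 FormCLI.bot))
  | [], h, _, _, _ => absurd rfl h
  | [e], _, _, χ, hd => by simpa [foldOrCLI, unionCLI, bigThetaCLI] using hd
  | e :: f :: l, _, hpw, χ, hd => by
      have hpw' := List.pairwise_cons.mp hpw
      have hdisj : e.1 ∩ unionCLI (f :: l) = ∅ := by
        ext x
        simp only [Set.mem_inter_iff, Set.mem_empty_iff_false, iff_false, not_and]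
        intro hxe hxu
        obtain ⟨q, hq, hxq⟩ := mem_unionCLI (f :: l) x hxu
        have h2 := hpw'.1 q hq
        have hx : x ∈ e.1 ∩ q.1 := ⟨hxe, hxq⟩
        rw [h2] at hx
        exact hx
      have h3 := DerCLI.r3 e.1 (unionCLI (f :: l)) e.2.1 (bigThetaCLI (f :: l)) χ hdisj
        (by simpa [unionCLI, bigThetaCLI] using hd)
      have h3' : DerCLI (FormCLI.or
          (FormCLI.cbox (unionCLI (f :: l)) ∅ (bigThetaCLI (f :: l)) FormCLI.bot)
          (FormCLI.or (FormCLI.cbox e.1 ∅ e.2.1 FormCLI.bot) χ)) := by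
        refine derCLI_mono h3 (fun v w hv => ?_)
        have hv' : evalCLI v w (FormCLI.cbox e.1 ∅ e.2.1 FormCLI.bot) ∨
            evalCLI v w (FormCLI.cbox (unionCLI (f :: l)) ∅ (bigThetaCLI (f :: l)) FormCLI.bot) ∨
            evalCLI v w χ := hv
        exact show _ ∨ _ ∨ _ by tauto
      have ih := splitCLI (f :: l) (by simp) hpw'.2 _ h3'
      refine derCLI_mono ih (fun v w hv => ?_)
      rw [List.map_cons]
      show evalCLI v w (foldOrCLI χ (_ :: _))
      rw [foldOrCLI]
      exact eval_commA v w _ χ _ hv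

lemma transformCLI : ∀ (l : List (ItemCLI Agt AP)),
    (∀ e ∈ l, ∀ χ : FormCLI Agt AP,
        DerCLI (FormCLI.or (FormCLI.cbox e.1 ∅ e.2.1 FormCLI.bot) χ) →
        DerCLI (FormCLI.or e.2.2 χ)) →
    ∀ χ : FormCLI Agt AP,
    DerCLI (foldOrCLI χ (l.map fun e => FormCLI.cbox e.1 ∅ e.2.1 FormCLI.bot)) →
    DerCLI (foldOrCLI χ (l.map fun e => e.2.2))
  | [], _, χ, hd => hd
  | e :: l, hstep, χ, hd => by
      rw [List.map_cons, foldOrCLI] at hd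
      have h1 : DerCLI (foldOrCLI (FormCLI.or (FormCLI.cbox e.1 ∅ e.2.1 FormCLI.bot) χ)
          (l.map fun e => FormCLI.cbox e.1 ∅ e.2.1 FormCLI.bot)) :=
        derCLI_mono hd (fun v w hv => eval_commB v w _ χ _ hv)
      have h2 := transformCLI l (fun e' he' => hstep e' (List.mem_cons_of_mem _ he')) _ h1
      have h3 : DerCLI (FormCLI.or (FormCLI.cbox e.1 ∅ e.2.1 FormCLI.bot)
          (foldOrCLI χ (l.map fun e => e.2.2))) :=
        derCLI_mono h2 (fun v w hv => eval_commA v w _ χ _ hv)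
      have h4 := hstep e (List.mem_cons_self) _ h3
      rw [List.map_cons, foldOrCLI]
      exact h4

end UpAuxCLI

/-- Upward derivability for CCSR_LI: if γ is derivable, or there is a neat pair
(NI1,NI2) of subsets of NI with ⋁_{i∈NI1}φ_i ∨ ⋁_{i∈NI2}(φ_i ∨ ψ_i) derivable, then
the standard disjunction γ ∨ ⋁_{i∈NI}[A_i]φ_i[B_i]_c ψ_i is derivable. -/
theorem upward_derivability_CCSR_LI
    {Agt AP : Type} [Fintype Agt] [Nonempty Agt] [Countable AP]
    {ι : Type} [DecidableEq ι]
    (γ : FormCLI Agt AP) (hγ : IsElemDisjCLI γ)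
    (NI : Finset ι) (A B : ι → Set Agt) (φ ψ : ι → FormCLI Agt AP)
    (h : DerCLI γ ∨
      ∃ NI1 ⊆ NI, ∃ NI2 ⊆ NI,
        (∀ i ∈ NI1, ∀ i' ∈ NI1, i ≠ i' → A i ∩ A i' = ∅) ∧
        (∀ i ∈ NI2, ∀ i' ∈ NI2, i ≠ i' → (A i ∪ B i) ∩ (A i' ∪ B i') = ∅) ∧
        (∀ i ∈ NI1, ∀ i' ∈ NI2, i ≠ i' → A i ∩ (A i' ∪ B i') = ∅) ∧
        DerCLI (FormCLI.or
          (bigOrCLI (NI1.toList.map fun i => φ i))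
          (bigOrCLI (NI2.toList.map fun i => FormCLI.or (φ i) (ψ i))))) :
    DerCLI (FormCLI.or γ
      (bigOrCLI (NI.toList.map fun i => FormCLI.cbox (A i) (B i) (φ i) (ψ i)))) := by
  rcases h with hγd | ⟨NI1, hNI1, NI2, hNI2, h1, h2, h12, hD⟩
  · exact derCLI_mono hγd (fun v w hv => Or.inl hv)
  · classical
    set boxT : ι → FormCLI Agt AP := fun i => FormCLI.cbox (A i) (B i) (φ i) (ψ i) with hboxT
    set NI1' : Finset ι := NI1 \ NI2 with hNI1'
    set L : List (ItemCLI Agt AP) :=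
      (NI1'.toList.map fun i => ((A i : Set Agt), φ i, boxT i)) ++
      (NI2.toList.map fun i => ((A i ∪ B i : Set Agt), FormCLI.or (φ i) (ψ i), boxT i))
      with hL
    by_cases hLnil : L = []
    · rw [hL, List.append_eq_nil_iff, List.map_eq_nil_iff, List.map_eq_nil_iff,
        Finset.toList_eq_nil, Finset.toList_eq_nil] at hLnil
      obtain ⟨h1n, h2n⟩ := hLnil
      have hNI1n : NI1 = ∅ := by
        have hsub : NI1 ⊆ NI2 := by
          rw [hNI1'] at h1n
          exact Finset.sdiff_eq_empty_iff_subset.mp h1n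
        rw [h2n] at hsub
        exact Finset.subset_empty.mp hsub
      refine derCLI_mono hD (fun v w hv => ?_)
      exfalso
      rw [eval_or_CLI, eval_bigOrCLI, eval_bigOrCLI] at hv
      rcases hv with ⟨g, hg, _⟩ | ⟨g, hg, _⟩ <;> simp [hNI1n, h2n] at hg
    · have hmemL1 : ∀ i ∈ NI1', ((A i : Set Agt), φ i, boxT i) ∈ L := fun i hi => by
        rw [hL]
        exact List.mem_append_left _ (List.mem_map_of_mem (Finset.mem_toList.mpr hi))
      have hmemL2 : ∀ i ∈ NI2,
          ((A i ∪ B i : Set Agt), FormCLI.or (φ i) (ψ i), boxT i) ∈ L := fun i hi => by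
        rw [hL]
        exact List.mem_append_right _ (List.mem_map_of_mem (Finset.mem_toList.mpr hi))
      have hDθ : DerCLI (bigThetaCLI L) := by
        refine derCLI_mono hD (fun v w hv => ?_)
        rw [eval_bigThetaCLI]
        rw [eval_or_CLI, eval_bigOrCLI, eval_bigOrCLI] at hv
        rcases hv with ⟨g, hg, hvg⟩ | ⟨g, hg, hvg⟩
        · rw [List.mem_map] at hg
          obtain ⟨i, hi, rfl⟩ := hg
          rw [Finset.mem_toList] at hi
          by_cases hi2 : i ∈ NI2
          · exact ⟨_, hmemL2 i hi2, Or.inl hvg⟩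
          · exact ⟨_, hmemL1 i (by rw [hNI1']; exact Finset.mem_sdiff.mpr ⟨hi, hi2⟩), hvg⟩
        · rw [List.mem_map] at hg
          obtain ⟨i, hi, rfl⟩ := hg
          rw [Finset.mem_toList] at hi
          exact ⟨_, hmemL2 i hi, hvg⟩
      have hNI1'sub : ∀ i ∈ NI1', i ∈ NI1 ∧ i ∉ NI2 := fun i hi => by
        rw [hNI1'] at hi; exact Finset.mem_sdiff.mp hi
      have hpwL : L.Pairwise (fun p q : ItemCLI Agt AP => p.1 ∩ q.1 = ∅) := by
        rw [hL, List.pairwise_append]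
        refine ⟨?_, ?_, ?_⟩
        · rw [List.pairwise_map]
          refine List.Pairwise.imp_of_mem ?_ NI1'.nodup_toList
          intro i j hi hj hne
          exact h1 i (hNI1'sub i (Finset.mem_toList.mp hi)).1
            j (hNI1'sub j (Finset.mem_toList.mp hj)).1 hne
        · rw [List.pairwise_map]
          refine List.Pairwise.imp_of_mem ?_ NI2.nodup_toList
          intro i j hi hj hne
          exact h2 i (Finset.mem_toList.mp hi) j (Finset.mem_toList.mp hj) hne
        · intro a ha b hb
          rw [List.mem_map] at ha hb
          obtain ⟨i, hi, rfl⟩ := ha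
          obtain ⟨j, hj, rfl⟩ := hb
          rw [Finset.mem_toList] at hi hj
          have hiN := hNI1'sub i hi
          exact h12 i hiN.1 j hj (fun he => hiN.2 (he ▸ hj))
      have hstart : DerCLI (FormCLI.or
          (FormCLI.cbox (unionCLI L) ∅ (bigThetaCLI L) FormCLI.bot) γ) :=
        derCLI_mono (DerCLI.r2 (unionCLI L) (bigThetaCLI L) hDθ) (fun v w hv => Or.inl hv)
      have hsplit := splitCLI L hLnil hpwL γ hstart
      have hstep : ∀ e ∈ L, ∀ χ : FormCLI Agt AP,
          DerCLI (FormCLI.or (FormCLI.cbox e.1 ∅ e.2.1 FormCLI.bot) χ) →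
          DerCLI (FormCLI.or e.2.2 χ) := by
        intro e he χ
        rw [hL, List.mem_append, List.mem_map, List.mem_map] at he
        rcases he with ⟨i, hi, rfl⟩ | ⟨i, hi, rfl⟩
        · exact DerCLI.r4 (A i) (B i) (φ i) (ψ i) χ
        · exact DerCLI.r5 (A i) (B i) (φ i) (ψ i) χ
      have htrans := transformCLI L hstep γ hsplit
      refine derCLI_mono htrans (fun v w hv => ?_)
      rw [eval_foldOrCLI] at hv
      rw [eval_or_CLI, eval_bigOrCLI]
      rcases hv with ⟨g, hg, hvg⟩ | hv
      · right
        rw [List.mem_map] at hg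
        obtain ⟨e, heL, rfl⟩ := hg
        rw [hL, List.mem_append, List.mem_map, List.mem_map] at heL
        rcases heL with ⟨i, hi, rfl⟩ | ⟨i, hi, rfl⟩
        · exact ⟨boxT i, List.mem_map_of_mem
            (Finset.mem_toList.mpr (hNI1 (hNI1'sub i (Finset.mem_toList.mp hi)).1)), hvg⟩
        · exact ⟨boxT i, List.mem_map_of_mem
            (Finset.mem_toList.mpr (hNI2 (Finset.mem_toList.mp hi))), hvg⟩
      · exact Or.inl hv
end

section
/- Completeness of CCSR_LI: every valid formula of Φ_CCSR_LI is derivable in the axiomatic system for CCSR_LI, i.e., for every φ ∈ Φ_CCSR_LI, if ⊨ φ then ⊢_CCSR_LI φ. -/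
open scoped Classical

namespace CCSRProof

variable {Agt AP : Type}

/-- Modal depth. -/
def depth : FormCLI Agt AP → ℕ
  | FormCLI.and φ ψ => max (depth φ) (depth ψ)
  | FormCLI.or φ ψ => max (depth φ) (depth ψ)
  | FormCLI.cbox _ _ φ ψ => max (depth φ) (depth ψ) + 1
  | _ => 0

theorem sat_eval (M : CGM Agt AP) (s : M.St) (φ : FormCLI Agt AP) :
    satCLI M s φ ↔ evalCLI (· ∈ M.lab s) (satCLI M s) φ := by
  induction φ <;> simp_all [satCLI, evalCLI]

theorem eval_bigOr (v : AP → Prop) (w : FormCLI Agt AP → Prop) (L : List (FormCLI Agt AP)) :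
    evalCLI v w (bigOrCLI L) ↔ ∃ ℓ ∈ L, evalCLI v w ℓ := by
  induction L with
  | nil => simp [bigOrCLI, evalCLI]
  | cons h t ih => simp [bigOrCLI, evalCLI, ih]

theorem sat_bigOr (M : CGM Agt AP) (s : M.St) (L : List (FormCLI Agt AP)) :
    satCLI M s (bigOrCLI L) ↔ ∃ ℓ ∈ L, satCLI M s ℓ := by
  induction L with
  | nil => simp [bigOrCLI, satCLI]
  | cons h t ih => simp [bigOrCLI, satCLI, ih]

/-- Simple formulas: literals and boxes. -/
inductive Simple : FormCLI Agt AP → Prop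
  | atom (p : AP) : Simple (FormCLI.atom p)
  | natom (p : AP) : Simple (FormCLI.natom p)
  | cbox (A B : Set Agt) (φ ψ : FormCLI Agt AP) : Simple (FormCLI.cbox A B φ ψ)

/-- Conjunctive normal form: list of clauses (each a list of simple formulas). -/
def cnf : FormCLI Agt AP → List (List (FormCLI Agt AP))
  | FormCLI.top => []
  | FormCLI.bot => [[]]
  | FormCLI.atom p => [[FormCLI.atom p]]
  | FormCLI.natom p => [[FormCLI.natom p]]
  | FormCLI.and φ ψ => cnf φ ++ cnf ψ
  | FormCLI.or φ ψ => (cnf φ).flatMap (fun c1 => (cnf ψ).map (fun c2 => c1 ++ c2))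
  | FormCLI.cbox A B φ ψ => [[FormCLI.cbox A B φ ψ]]

theorem cnf_simple : ∀ φ : FormCLI Agt AP, ∀ c ∈ cnf φ, ∀ ℓ ∈ c, Simple ℓ := by
  intro φ
  induction φ with
  | top => simp [cnf]
  | bot => simp [cnf]
  | atom p => simp [cnf]; exact Simple.atom p
  | natom p => simp [cnf]; exact Simple.natom p
  | and φ ψ ih1 ih2 =>
      intro c hc ℓ hl
      rcases List.mem_append.mp hc with h | h
      · exact ih1 c h ℓ hl
      · exact ih2 c h ℓ hl
  | or φ ψ ih1 ih2 =>
      intro c hc ℓ hl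
      simp only [cnf, List.mem_flatMap, List.mem_map] at hc
      obtain ⟨c1, hc1, c2, hc2, rfl⟩ := hc
      rcases List.mem_append.mp hl with h | h
      · exact ih1 c1 hc1 ℓ h
      · exact ih2 c2 hc2 ℓ h
  | cbox A B φ ψ ih1 ih2 => simp [cnf]; exact Simple.cbox A B φ ψ

theorem cnf_depth : ∀ φ : FormCLI Agt AP, ∀ c ∈ cnf φ, ∀ ℓ ∈ c, depth ℓ ≤ depth φ := by
  intro φ
  induction φ with
  | top => simp [cnf]
  | bot => simp [cnf]
  | atom p => simp [cnf]
  | natom p => simp [cnf]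
  | and φ ψ ih1 ih2 =>
      intro c hc ℓ hl
      rcases List.mem_append.mp hc with h | h
      · exact le_trans (ih1 c h ℓ hl) (le_max_left _ _)
      · exact le_trans (ih2 c h ℓ hl) (le_max_right _ _)
  | or φ ψ ih1 ih2 =>
      intro c hc ℓ hl
      simp only [cnf, List.mem_flatMap, List.mem_map] at hc
      obtain ⟨c1, hc1, c2, hc2, rfl⟩ := hc
      rcases List.mem_append.mp hl with h | h
      · exact le_trans (ih1 c1 hc1 ℓ h) (le_max_left _ _)
      · exact le_trans (ih2 c2 hc2 ℓ h) (le_max_right _ _)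
  | cbox A B φ ψ ih1 ih2 => simp [cnf]

theorem eval_cnf (v : AP → Prop) (w : FormCLI Agt AP → Prop) (φ : FormCLI Agt AP) :
    evalCLI v w φ ↔ ∀ c ∈ cnf φ, ∃ ℓ ∈ c, evalCLI v w ℓ := by
  induction φ with
  | top => simp [cnf, evalCLI]
  | bot => simp [cnf, evalCLI]
  | atom p => simp [cnf, evalCLI]
  | natom p => simp [cnf, evalCLI]
  | and φ ψ ih1 ih2 =>
      simp only [evalCLI, ih1, ih2]
      constructor
      · rintro ⟨h1, h2⟩ c hc
        rcases List.mem_append.mp hc with h | h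
        · exact h1 c h
        · exact h2 c h
      · intro h
        exact ⟨fun c hc => h c (List.mem_append.mpr (Or.inl hc)),
               fun c hc => h c (List.mem_append.mpr (Or.inr hc))⟩
  | or φ ψ ih1 ih2 =>
      simp only [evalCLI, ih1, ih2]
      constructor
      · intro h c hc
        simp only [cnf, List.mem_flatMap, List.mem_map] at hc
        obtain ⟨c1, hc1, c2, hc2, rfl⟩ := hc
        rcases h with h | h
        · obtain ⟨ℓ, hl, he⟩ := h c1 hc1
          exact ⟨ℓ, List.mem_append.mpr (Or.inl hl), he⟩
        · obtain ⟨ℓ, hl, he⟩ := h c2 hc2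
          exact ⟨ℓ, List.mem_append.mpr (Or.inr hl), he⟩
      · intro h
        by_cases h1 : ∀ c ∈ cnf φ, ∃ ℓ ∈ c, evalCLI v w ℓ
        · exact Or.inl h1
        · right
          push_neg at h1
          obtain ⟨c1, hc1, hbad⟩ := h1
          intro c2 hc2
          have : ∃ ℓ ∈ c1 ++ c2, evalCLI v w ℓ := by
            apply h
            simp only [cnf, List.mem_flatMap, List.mem_map]
            exact ⟨c1, hc1, c2, hc2, rfl⟩
          obtain ⟨ℓ, hl, he⟩ := this
          rcases List.mem_append.mp hl with hmem | hmem
          · exact absurd he (hbad ℓ hmem)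
          · exact ⟨ℓ, hmem, he⟩
  | cbox A B φ ψ ih1 ih2 => simp [cnf, evalCLI]

theorem der_taut (ψ : FormCLI Agt AP)
    (h : ∀ (v : AP → Prop) (w : FormCLI Agt AP → Prop), evalCLI v w ψ) : DerCLI ψ :=
  DerCLI.r1 [] ψ (by simp) (fun v w _ => h v w)

theorem der_mono {φ ψ : FormCLI Agt AP} (h : DerCLI φ)
    (himp : ∀ (v : AP → Prop) (w : FormCLI Agt AP → Prop), evalCLI v w φ → evalCLI v w ψ) :
    DerCLI ψ :=
  DerCLI.r1 [φ] ψ (by simpa) (fun v w hh => himp v w (hh φ (by simp)))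

theorem depth_bigOr {L : List (FormCLI Agt AP)} {k : ℕ} (h : ∀ ℓ ∈ L, depth ℓ ≤ k) :
    depth (bigOrCLI L) ≤ k := by
  induction L with
  | nil => simp [bigOrCLI, depth]
  | cons x t ih =>
      simp only [bigOrCLI, depth, max_le_iff]
      exact ⟨h x (by simp), ih (fun ℓ hl => h ℓ (by simp [hl]))⟩

end CCSRProof
namespace CCSRProof

variable {Agt AP : Type}

/-- Standard presentation of a concurrent game model: per-agent available
actions plus an outcome function on full action profiles. -/
structure Std (Agt AP : Type) where
  St : Type
  Act : Type
  st_ne : Nonempty St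
  act_ne : Nonempty Act
  avail : St → Agt → Set Act
  avail_ne : ∀ s a, (avail s a).Nonempty
  nxt : St → (Agt → Option Act) → St
  lab : St → Set AP

def stdAja (S : Std Agt AP) (s : S.St) (A : Set Agt) : Set (Agt → Option S.Act) :=
  {σ | (∀ a, (σ a).isSome ↔ a ∈ A) ∧ ∀ a α, σ a = some α → α ∈ S.avail s a}

def stdOut (S : Std Agt AP) (s : S.St) (σ : Agt → Option S.Act) : Set S.St :=
  {t | (∀ a α, σ a = some α → α ∈ S.avail s a) ∧
       ∃ π ∈ stdAja S s Set.univ, subJA σ π ∧ t = S.nxt s π}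

theorem subJA_full_eq {Act : Type} {σ π : Agt → Option Act} (hfull : ∀ a, (σ a).isSome)
    (h : subJA σ π) : π = σ := by
  funext a
  obtain ⟨x, hx⟩ := Option.isSome_iff_exists.mp (hfull a)
  rw [hx, h a x hx]

theorem stdOut_full {S : Std Agt AP} {s : S.St} {σ : Agt → Option S.Act}
    (h : σ ∈ stdAja S s Set.univ) : stdOut S s σ = {S.nxt s σ} := by
  have hfull : ∀ a, (σ a).isSome := fun a => (h.1 a).mpr (Set.mem_univ a)
  ext t
  simp only [stdOut, Set.mem_setOf_eq, Set.mem_singleton_iff]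
  constructor
  · rintro ⟨-, π, hπ, hsub, rfl⟩
    rw [subJA_full_eq hfull hsub]
  · rintro rfl
    exact ⟨h.2, σ, h, fun a x hx => hx, rfl⟩

noncomputable def Std.toCGM (S : Std Agt AP) : CGM Agt AP where
  St := S.St
  Act := S.Act
  st_ne := S.st_ne
  act_ne := S.act_ne
  aja := stdAja S
  out := stdOut S
  lab := S.lab
  aja_ne := by
    intro s A
    refine ⟨fun a => if a ∈ A then some (S.avail_ne s a).choose else none, ?_, ?_⟩
    · intro a; by_cases h : a ∈ A <;> simp [h]
    · intro a α h
      by_cases ha : a ∈ A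
      · simp only [if_pos ha, Option.some.injEq] at h
        rw [← h]; exact (S.avail_ne s a).choose_spec
      · simp [if_neg ha] at h
  aja_dom := fun s A σ hσ => hσ.1
  aja_glue := by
    intro s A σ hA hdom
    constructor
    · rintro ⟨-, hav⟩ a ha
      refine ⟨?_, ?_⟩
      · intro b
        simp only [restrictJA, Set.mem_singleton_iff]
        by_cases hb : b = a
        · simp [hb, hdom, ha]
        · simp [hb]
      · intro b α hb
        simp only [restrictJA] at hb
        by_cases hmem : b ∈ ({a} : Set Agt)
        · rw [if_pos hmem] at hb; exact hav b α hb
        · rw [if_neg hmem] at hb; cases hb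
    · intro h
      refine ⟨hdom, ?_⟩
      intro a α ha
      have haA : a ∈ A := (hdom a).mp (by simp [ha])
      have := (h a haA).2 a α ?_
      · exact this
      · simp [restrictJA, ha]
  out_univ := by
    intro s σ h
    exact ⟨S.nxt s σ, stdOut_full h⟩
  out_univ_not := by
    intro s σ hfull hnot
    ext t
    simp only [stdOut, Set.mem_setOf_eq, Set.mem_empty_iff_false, iff_false, not_and]
    intro hav
    exact absurd ⟨fun a => by simp [hfull a], hav⟩ hnot
  out_glue := by
    intro s A hA σ hσ
    ext t
    constructor
    · rintro ⟨hav, π, hπ, hsub, rfl⟩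
      refine ⟨π, hπ, hsub, ?_⟩
      rw [stdOut_full hπ]
      rfl
    · rintro ⟨π, hπ, hsub, ht⟩
      rw [stdOut_full hπ, Set.mem_singleton_iff] at ht
      exact ⟨hσ.2, π, hπ, hsub, ht⟩
  out_not := by
    intro s A σ hdom hA hnot
    ext t
    simp only [stdOut, Set.mem_setOf_eq, Set.mem_empty_iff_false, iff_false, not_and]
    intro hav
    exact absurd ⟨hdom, hav⟩ hnot

def satStd (S : Std Agt AP) (s : S.St) (φ : FormCLI Agt AP) : Prop :=
  satCLI S.toCGM s φ

theorem toCGM_aja (S : Std Agt AP) : S.toCGM.aja = stdAja S := rfl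
theorem toCGM_out (S : Std Agt AP) : S.toCGM.out = stdOut S := rfl
theorem toCGM_lab (S : Std Agt AP) : S.toCGM.lab = S.lab := rfl

theorem satStd_cbox {S : Std Agt AP} {s : S.St} {A B : Set Agt} {φ ψ : FormCLI Agt AP} :
    satStd S s (FormCLI.cbox A B φ ψ) ↔
      ∀ σA ∈ stdAja S s A,
        (∃ t ∈ stdOut S s σA, satStd S t φ) ∨
        ∀ σB ∈ stdAja S s B, ∃ t ∈ stdOut S s (uplusJA A B σA σB), satStd S t ψ :=
  Iff.rfl

end CCSRProof
namespace CCSRProof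

variable {Agt AP : Type}

noncomputable def singleJA {Act : Type} (a : Agt) (α : Act) : Agt → Option Act :=
  fun b => if b = a then some α else none

theorem restrict_single {Act : Type} {σ : Agt → Option Act} {a : Agt} {α : Act}
    (h : σ a = some α) : restrictJA σ {a} = singleJA a α := by
  funext b
  simp only [restrictJA, singleJA, Set.mem_singleton_iff]
  by_cases hb : b = a
  · subst hb; simp [h]
  · simp [hb]

/-- Every CGM has a standard presentation. -/
@[reducible]
noncomputable def _root_.CGM.toStd (M : CGM Agt AP) : Std Agt AP where
  St := M.St
  Act := M.Act
  st_ne := M.st_ne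
  act_ne := M.act_ne
  avail s a := {α | singleJA a α ∈ M.aja s {a}}
  avail_ne := by
    intro s a
    obtain ⟨σ, hσ⟩ := M.aja_ne s {a}
    have hd := M.aja_dom s {a} σ hσ
    have ha : (σ a).isSome := (hd a).mpr rfl
    obtain ⟨α, hα⟩ := Option.isSome_iff_exists.mp ha
    refine ⟨α, ?_⟩
    have : singleJA a α = σ := by
      funext b
      by_cases hb : b = a
      · subst hb; simp [singleJA, hα]
      · simp only [singleJA, if_neg hb]
        have : ¬ (σ b).isSome := by
          rw [hd b]; simp [hb]
        exact (Option.not_isSome_iff_eq_none.mp this).symm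
    rw [Set.mem_setOf_eq, this]
    exact hσ
  nxt s π := if h : π ∈ M.aja s Set.univ then (M.out_univ s π h).choose
             else Classical.choice M.st_ne
  lab := M.lab

theorem toStd_aja (M : CGM Agt AP) (s : M.St) (A : Set Agt) :
    stdAja M.toStd s A = M.aja s A := by
  ext σ
  constructor
  · rintro ⟨hdom, hav⟩
    rcases Set.eq_empty_or_nonempty A with rfl | hne
    · have hσ : σ = fun _ => none := by
        funext a
        have := (hdom a)
        simp only [Set.mem_empty_iff_false, iff_false] at this
        exact Option.not_isSome_iff_eq_none.mp this
      obtain ⟨σ₀, h₀⟩ := M.aja_ne s ∅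
      have hd₀ := M.aja_dom s ∅ σ₀ h₀
      have hσ₀ : σ₀ = fun _ => none := by
        funext a
        have := hd₀ a
        simp only [Set.mem_empty_iff_false, iff_false] at this
        exact Option.not_isSome_iff_eq_none.mp this
      rw [hσ, ← hσ₀]
      exact h₀
    · rw [M.aja_glue s A σ hne hdom]
      intro a ha
      obtain ⟨α, hα⟩ := Option.isSome_iff_exists.mp ((hdom a).mpr ha)
      rw [restrict_single hα]
      exact hav a α hα
  · intro hσ
    have hdom := M.aja_dom s A σ hσ
    refine ⟨hdom, ?_⟩
    intro a α hα
    have haA : a ∈ A := (hdom a).mp (by simp [hα])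
    have hne : A.Nonempty := ⟨a, haA⟩
    have := (M.aja_glue s A σ hne hdom).mp hσ a haA
    rw [restrict_single hα] at this
    exact this

theorem toStd_nxt_spec (M : CGM Agt AP) (s : M.St) (π : Agt → Option M.Act)
    (h : π ∈ M.aja s Set.univ) : M.out s π = {M.toStd.nxt s π} := by
  show M.out s π = {if h' : π ∈ M.aja s Set.univ then (M.out_univ s π h').choose
                    else Classical.choice M.st_ne}
  rw [dif_pos h]
  exact (M.out_univ s π h).choose_spec

theorem toStd_out (M : CGM Agt AP) (s : M.St) (σ : Agt → Option M.Act) :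
    stdOut M.toStd s σ = M.out s σ := by
  classical
  set A : Set Agt := {a | (σ a).isSome} with hAdef
  have hdom : ∀ a, (σ a).isSome ↔ a ∈ A := fun a => Iff.rfl
  by_cases hu : A = Set.univ
  · by_cases hin : σ ∈ M.aja s Set.univ
    · have h1 : σ ∈ stdAja M.toStd s Set.univ := by rw [toStd_aja]; exact hin
      rw [stdOut_full h1, toStd_nxt_spec M s σ hin]
    · have h1 : M.out s σ = ∅ := by
        apply M.out_univ_not s σ
        · intro a
          have : a ∈ A := hu ▸ Set.mem_univ a
          exact (hdom a).mpr this
        · exact hin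
      rw [h1]
      ext t
      simp only [stdOut, Set.mem_setOf_eq, Set.mem_empty_iff_false, iff_false, not_and]
      intro hav
      exfalso
      apply hin
      rw [← toStd_aja]
      exact ⟨fun a => by rw [hdom a, hu], hav⟩
  · by_cases hin : σ ∈ M.aja s A
    · have hout := M.out_glue s A hu σ hin
      have hσstd : σ ∈ stdAja M.toStd s A := by rw [toStd_aja]; exact hin
      rw [hout]
      ext t
      simp only [stdOut, Set.mem_setOf_eq]
      constructor
      · rintro ⟨hav, π, hπ, hsub, rfl⟩
        refine ⟨π, by rw [← toStd_aja]; exact hπ, hsub, ?_⟩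
        show M.toStd.nxt s π ∈ M.out s π
        rw [toStd_nxt_spec M s π (by rwa [toStd_aja] at hπ)]
        rfl
      · rintro ⟨π, hπ, hsub, ht⟩
        rw [toStd_nxt_spec M s π hπ, Set.mem_singleton_iff] at ht
        exact ⟨hσstd.2, π, by rw [toStd_aja]; exact hπ, hsub, ht⟩
    · have h1 : M.out s σ = ∅ := M.out_not s A σ hdom hu hin
      rw [h1]
      ext t
      simp only [stdOut, Set.mem_setOf_eq, Set.mem_empty_iff_false, iff_false, not_and]
      intro hav
      exfalso
      apply hin
      rw [← toStd_aja]
      exact ⟨hdom, hav⟩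

theorem toStd_sat (M : CGM Agt AP) (φ : FormCLI Agt AP) :
    ∀ s : M.St, satStd M.toStd s φ ↔ satCLI M s φ := by
  induction φ with
  | top => intro s; simp [satStd, satCLI]
  | bot => intro s; simp [satStd, satCLI]
  | atom p => intro s; simp [satStd, satCLI]; rfl
  | natom p => intro s; simp [satStd, satCLI]; rfl
  | and φ ψ ih1 ih2 => intro s; simp only [satStd, satCLI] at *; rw [ih1 s, ih2 s]
  | or φ ψ ih1 ih2 => intro s; simp only [satStd, satCLI] at *; rw [ih1 s, ih2 s]
  | cbox A B φ ψ ih1 ih2 =>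
      intro s
      show (∀ σA ∈ stdAja M.toStd s A, _ ∨ _) ↔ _
      simp only [satStd] at ih1 ih2
      simp only [satCLI, satStd, toCGM_aja, toCGM_out, toStd_aja, toStd_out]
      constructor
      · intro h σA hσA
        rcases h σA hσA with ⟨t, ht, hφ⟩ | h2
        · exact Or.inl ⟨t, ht, (ih1 t).mp hφ⟩
        · refine Or.inr fun σB hσB => ?_
          obtain ⟨t, ht, hψ⟩ := h2 σB hσB
          exact ⟨t, (Set.ext_iff.mp (toStd_out M s _) t).mp ht, (ih2 t).mp hψ⟩
      · intro h σA hσA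
        rcases h σA hσA with ⟨t, ht, hφ⟩ | h2
        · exact Or.inl ⟨t, ht, (ih1 t).mpr hφ⟩
        · refine Or.inr fun σB hσB => ?_
          obtain ⟨t, ht, hψ⟩ := h2 σB hσB
          exact ⟨t, (Set.ext_iff.mp (toStd_out M s _) t).mpr ht, (ih2 t).mpr hψ⟩

end CCSRProof
namespace CCSRProof

variable {Agt AP : Type}

/-- An embedding of one standard model into another. -/
structure Emb (N C : Std Agt AP) where
  gs : N.St → C.St
  ga : N.Act → C.Act
  ga_inj : Function.Injective ga
  avail_eq : ∀ s a, C.avail (gs s) a = ga '' N.avail s a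
  nxt_eq : ∀ s π, π ∈ stdAja N s Set.univ →
    C.nxt (gs s) (fun a => (π a).map ga) = gs (N.nxt s π)
  lab_eq : ∀ s, C.lab (gs s) = N.lab s

variable {N C : Std Agt AP}

def mapJA (e : Emb N C) (σ : Agt → Option N.Act) : Agt → Option C.Act :=
  fun a => (σ a).map e.ga

theorem emb_aja (e : Emb N C) {s : N.St} {A : Set Agt} {σ : Agt → Option N.Act} :
    σ ∈ stdAja N s A ↔ mapJA e σ ∈ stdAja C (e.gs s) A := by
  constructor
  · rintro ⟨hdom, hav⟩
    refine ⟨fun a => by simp [mapJA, Option.isSome_map, hdom a], ?_⟩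
    intro a β hβ
    simp only [mapJA, Option.map_eq_some_iff] at hβ
    obtain ⟨α, hα, rfl⟩ := hβ
    rw [e.avail_eq]
    exact ⟨α, hav a α hα, rfl⟩
  · rintro ⟨hdom, hav⟩
    refine ⟨fun a => by have := hdom a; simpa [mapJA, Option.isSome_map] using this, ?_⟩
    intro a α hα
    have hβ := hav a (e.ga α) (by simp [mapJA, hα])
    rw [e.avail_eq] at hβ
    obtain ⟨α', hα', heq⟩ := hβ
    rwa [← e.ga_inj heq]

theorem emb_aja_surj (e : Emb N C) {s : N.St} {A : Set Agt} {σ' : Agt → Option C.Act}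
    (h : σ' ∈ stdAja C (e.gs s) A) : ∃ σ ∈ stdAja N s A, σ' = mapJA e σ := by
  classical
  refine ⟨fun a => if h' : ∃ α ∈ N.avail s a, σ' a = some (e.ga α) then some h'.choose
                   else none, ⟨?_, ?_⟩, ?_⟩
  · intro a
    by_cases hmem : a ∈ A
    · have hs : (σ' a).isSome := (h.1 a).mpr hmem
      obtain ⟨β, hβ⟩ := Option.isSome_iff_exists.mp hs
      have hβav : β ∈ C.avail (e.gs s) a := h.2 a β hβ
      rw [e.avail_eq] at hβav
      obtain ⟨α, hα, rfl⟩ := hβav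
      have hex : ∃ α ∈ N.avail s a, σ' a = some (e.ga α) := ⟨α, hα, hβ⟩
      simp [dif_pos hex, hmem]
    · have : ¬ (σ' a).isSome := fun hs => hmem ((h.1 a).mp hs)
      have hnone : σ' a = none := Option.not_isSome_iff_eq_none.mp this
      have hex : ¬ ∃ α ∈ N.avail s a, σ' a = some (e.ga α) := by
        rintro ⟨α, -, hc⟩; rw [hnone] at hc; cases hc
      simp [dif_neg hex, hmem]
  · intro a α hα
    by_cases hex : ∃ α ∈ N.avail s a, σ' a = some (e.ga α)
    · simp only [dif_pos hex, Option.some.injEq] at hα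
      rw [← hα]
      exact hex.choose_spec.1
    · simp [dif_neg hex] at hα
  · funext a
    by_cases hex : ∃ α ∈ N.avail s a, σ' a = some (e.ga α)
    · simp only [mapJA, dif_pos hex, Option.map_some]
      exact hex.choose_spec.2
    · simp only [mapJA, dif_neg hex, Option.map_none]
      by_cases hmem : a ∈ A
      · exfalso
        have hs : (σ' a).isSome := (h.1 a).mpr hmem
        obtain ⟨β, hβ⟩ := Option.isSome_iff_exists.mp hs
        have hβav : β ∈ C.avail (e.gs s) a := h.2 a β hβ
        rw [e.avail_eq] at hβav
        obtain ⟨α, hα, rfl⟩ := hβav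
        exact hex ⟨α, hα, hβ⟩
      · exact Option.not_isSome_iff_eq_none.mp (fun hs => hmem ((h.1 a).mp hs))

theorem emb_sub (e : Emb N C) {σ π : Agt → Option N.Act} :
    subJA σ π ↔ subJA (mapJA e σ) (mapJA e π) := by
  constructor
  · intro h a β hβ
    simp only [mapJA, Option.map_eq_some_iff] at hβ ⊢
    obtain ⟨α, hα, rfl⟩ := hβ
    exact ⟨α, h a α hα, rfl⟩
  · intro h a α hα
    have := h a (e.ga α) (by simp [mapJA, hα])
    simp only [mapJA, Option.map_eq_some_iff] at this
    obtain ⟨α', hα', heq⟩ := this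
    rwa [← e.ga_inj heq]

theorem emb_uplus (e : Emb N C) (A B : Set Agt) (σ τ : Agt → Option N.Act) :
    mapJA e (uplusJA A B σ τ) = uplusJA A B (mapJA e σ) (mapJA e τ) := by
  funext a
  simp only [mapJA, uplusJA]
  by_cases h1 : a ∈ A
  · simp [h1]
  · by_cases h2 : a ∈ B <;> simp [h1, h2]

theorem emb_out (e : Emb N C) {s : N.St} (σ : Agt → Option N.Act) :
    stdOut C (e.gs s) (mapJA e σ) = e.gs '' stdOut N s σ := by
  ext t
  simp only [stdOut, Set.mem_setOf_eq, Set.mem_image]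
  constructor
  · rintro ⟨hav, π', hπ', hsub, rfl⟩
    obtain ⟨π, hπ, rfl⟩ := emb_aja_surj e hπ'
    have hsub' : subJA σ π := (emb_sub e).mpr hsub
    have havN : ∀ a α, σ a = some α → α ∈ N.avail s a := by
      intro a α hα
      have := hav a (e.ga α) (by simp [mapJA, hα])
      rw [e.avail_eq] at this
      obtain ⟨α', hα', heq⟩ := this
      rwa [← e.ga_inj heq]
    refine ⟨N.nxt s π, ⟨havN, π, hπ, hsub', rfl⟩, ?_⟩
    exact (e.nxt_eq s π hπ).symm
  · rintro ⟨u, ⟨hav, π, hπ, hsub, rfl⟩, rfl⟩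
    refine ⟨?_, mapJA e π, (emb_aja e).mp hπ, (emb_sub e).mp hsub, (e.nxt_eq s π hπ).symm⟩
    intro a β hβ
    simp only [mapJA, Option.map_eq_some_iff] at hβ
    obtain ⟨α, hα, rfl⟩ := hβ
    rw [e.avail_eq]
    exact ⟨α, hav a α hα, rfl⟩

theorem emb_sat (e : Emb N C) (φ : FormCLI Agt AP) :
    ∀ s : N.St, satStd C (e.gs s) φ ↔ satStd N s φ := by
  induction φ with
  | top => intro s; simp [satStd, satCLI]
  | bot => intro s; simp [satStd, satCLI]
  | atom p =>
      intro s
      show p ∈ C.lab (e.gs s) ↔ p ∈ N.lab s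
      rw [e.lab_eq]
  | natom p =>
      intro s
      show p ∉ C.lab (e.gs s) ↔ p ∉ N.lab s
      rw [e.lab_eq]
  | and φ ψ ih1 ih2 =>
      intro s
      show (satStd C _ φ ∧ satStd C _ ψ) ↔ (satStd N _ φ ∧ satStd N _ ψ)
      rw [ih1 s, ih2 s]
  | or φ ψ ih1 ih2 =>
      intro s
      show (satStd C _ φ ∨ satStd C _ ψ) ↔ (satStd N _ φ ∨ satStd N _ ψ)
      rw [ih1 s, ih2 s]
  | cbox A B φ ψ ih1 ih2 =>
      intro s
      rw [satStd_cbox, satStd_cbox]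
      constructor
      · intro h σA hσA
        rcases h (mapJA e σA) ((emb_aja e).mp hσA) with ⟨t, ht, hφ⟩ | h2
        · rw [emb_out e] at ht
          obtain ⟨u, hu, rfl⟩ := ht
          exact Or.inl ⟨u, hu, (ih1 u).mp hφ⟩
        · refine Or.inr fun σB hσB => ?_
          obtain ⟨t, ht, hψ⟩ := h2 (mapJA e σB) ((emb_aja e).mp hσB)
          rw [← emb_uplus e, emb_out e] at ht
          obtain ⟨u, hu, rfl⟩ := ht
          exact ⟨u, hu, (ih2 u).mp hψ⟩
      · intro h σA' hσA'
        obtain ⟨σA, hσA, rfl⟩ := emb_aja_surj e hσA'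
        rcases h σA hσA with ⟨u, hu, hφ⟩ | h2
        · refine Or.inl ⟨e.gs u, ?_, (ih1 u).mpr hφ⟩
          rw [emb_out e]
          exact ⟨u, hu, rfl⟩
        · refine Or.inr fun σB' hσB' => ?_
          obtain ⟨σB, hσB, rfl⟩ := emb_aja_surj e hσB'
          obtain ⟨u, hu, hψ⟩ := h2 σB hσB
          refine ⟨e.gs u, ?_, (ih2 u).mpr hψ⟩
          rw [← emb_uplus e, emb_out e]
          exact ⟨u, hu, rfl⟩

end CCSRProof
namespace CCSRProof

variable {Agt AP : Type}

abbrev BoxT (Agt AP : Type) := Set Agt × Set Agt × FormCLI Agt AP × FormCLI Agt AP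

def coalOf (x : BoxT Agt AP) (b : Bool) : Set Agt := cond b (x.1 ∪ x.2.1) x.1

def thOf (x : BoxT Agt AP) (b : Bool) : FormCLI Agt AP :=
  cond b (FormCLI.or x.2.2.1 x.2.2.2) x.2.2.1

section Root

variable (bs : List (BoxT Agt AP))

abbrev SelT := Fin bs.length → Option Bool

variable (N : SelT bs → Std Agt AP) (t0 : ∀ sel, (N sel).St) (negs : Set AP)

abbrev RAct : Type := (Option (Fin bs.length × Bool)) ⊕ (Σ sel : SelT bs, (N sel).Act)
abbrev RSt : Type := Option (Σ sel : SelT bs, (N sel).St)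

def vOf (π : Agt → Option (RAct bs N)) (a : Agt) : Option (Fin bs.length × Bool) :=
  match π a with
  | some (Sum.inl v) => v
  | _ => none

noncomputable def selOf (π : Agt → Option (RAct bs N)) : SelT bs :=
  fun i => if ∀ a ∈ (bs.get i).1, vOf bs N π a = some (i, false)
    then some (if ∀ a ∈ (bs.get i).2.1 \ (bs.get i).1, vOf bs N π a = some (i, true)
               then true else false)
    else none

noncomputable def projA (sel : SelT bs) : RAct bs N → Option ((N sel).Act) :=
  fun x => match x with
  | Sum.inr y => if h : y.1 = sel then some (h ▸ y.2) else none
  | _ => none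

theorem projA_ga (sel : SelT bs) (α : (N sel).Act) :
    projA bs N sel (Sum.inr ⟨sel, α⟩) = some α := by
  simp [projA]

@[reducible]
noncomputable def RStd : Std Agt AP where
  St := RSt bs N
  Act := RAct bs N
  st_ne := ⟨none⟩
  act_ne := ⟨Sum.inl none⟩
  avail s a :=
    match s with
    | none => Set.range Sum.inl
    | some ⟨sel, u⟩ => (fun α => Sum.inr ⟨sel, α⟩) '' (N sel).avail u a
  avail_ne := by
    intro s a
    match s with
    | none => exact ⟨Sum.inl none, Set.mem_range_self _⟩
    | some ⟨sel, u⟩ => exact ((N sel).avail_ne u a).image _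
  nxt s π :=
    match s with
    | none => some ⟨selOf bs N π, t0 (selOf bs N π)⟩
    | some ⟨sel, u⟩ => some ⟨sel, (N sel).nxt u (fun a => (π a).bind (projA bs N sel))⟩
  lab s := match s with | none => negs | some ⟨sel, u⟩ => (N sel).lab u

noncomputable def rootEmb (sel : SelT bs) : Emb (N sel) (RStd bs N t0 negs) where
  gs u := some ⟨sel, u⟩
  ga α := Sum.inr ⟨sel, α⟩
  ga_inj := by
    intro a b h
    simpa [projA_ga] using congrArg (projA bs N sel) h
  avail_eq := by intro s a; rfl
  nxt_eq := by
    intro s π hπ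
    have hdec : (fun a => (Option.map (fun α => (Sum.inr ⟨sel, α⟩ : RAct bs N)) (π a)).bind
        (projA bs N sel)) = π := by
      funext a
      cases h : π a with
      | none => simp [h]
      | some α => simp [h, projA_ga]
    have hrfl : (RStd bs N t0 negs).nxt (some ⟨sel, s⟩)
        (fun a => Option.map (fun α => (Sum.inr ⟨sel, α⟩ : RAct bs N)) (π a))
        = some ⟨sel, (N sel).nxt s (fun a => (Option.map (fun α => (Sum.inr ⟨sel, α⟩ : RAct bs N))
            (π a)).bind (projA bs N sel))⟩ := rfl
    rw [hdec] at hrfl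
    exact hrfl
  lab_eq := by intro s; rfl

theorem selOf_cond1 {π : Agt → Option (RAct bs N)} {i : Fin bs.length} {b : Bool}
    (h : selOf bs N π i = some b) :
    ∀ a ∈ (bs.get i).1, vOf bs N π a = some (i, false) := by
  by_cases hc : ∀ a ∈ (bs.get i).1, vOf bs N π a = some (i, false)
  · exact hc
  · exfalso
    simp only [selOf, if_neg hc] at h
    cases h

theorem selOf_cond2 {π : Agt → Option (RAct bs N)} {i : Fin bs.length}
    (h : selOf bs N π i = some true) :
    ∀ a ∈ (bs.get i).2.1 \ (bs.get i).1, vOf bs N π a = some (i, true) := by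
  by_cases hc : ∀ a ∈ (bs.get i).1, vOf bs N π a = some (i, false)
  · by_cases hc2 : ∀ a ∈ (bs.get i).2.1 \ (bs.get i).1, vOf bs N π a = some (i, true)
    · exact hc2
    · exfalso
      simp only [selOf, if_pos hc, if_neg hc2, Option.some.injEq] at h
      cases h
  · exfalso
    simp only [selOf, if_neg hc] at h
    cases h

theorem selOf_some_of_cond1 {π : Agt → Option (RAct bs N)} {i : Fin bs.length}
    (hc : ∀ a ∈ (bs.get i).1, vOf bs N π a = some (i, false)) :
    ∃ b, selOf bs N π i = some b := by
  simp only [selOf, if_pos hc]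
  exact ⟨_, rfl⟩

theorem selOf_true_of {π : Agt → Option (RAct bs N)} {i : Fin bs.length}
    (hc : ∀ a ∈ (bs.get i).1, vOf bs N π a = some (i, false))
    (hc2 : ∀ a ∈ (bs.get i).2.1 \ (bs.get i).1, vOf bs N π a = some (i, true)) :
    selOf bs N π i = some true := by
  simp only [selOf, if_pos hc, if_pos hc2]

def DisjSel (sel : SelT bs) : Prop :=
  ∀ i j bi bj, sel i = some bi → sel j = some bj → i ≠ j →
    coalOf (bs.get i) bi ∩ coalOf (bs.get j) bj = ∅

theorem vote_unique {π : Agt → Option (RAct bs N)} {i : Fin bs.length} {b : Bool}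
    (h : selOf bs N π i = some b) {a : Agt} (ha : a ∈ coalOf (bs.get i) b) :
    ∃ b', vOf bs N π a = some (i, b') := by
  cases b with
  | false => exact ⟨false, selOf_cond1 bs N h a ha⟩
  | true =>
      by_cases h1 : a ∈ (bs.get i).1
      · exact ⟨false, selOf_cond1 bs N h a h1⟩
      · have ha' : a ∈ (bs.get i).2.1 \ (bs.get i).1 := by
          rcases (ha : a ∈ (bs.get i).1 ∪ (bs.get i).2.1) with h' | h'
          · exact absurd h' h1
          · exact ⟨h', h1⟩
        exact ⟨true, selOf_cond2 bs N h a ha'⟩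

theorem selOf_disj (π : Agt → Option (RAct bs N)) : DisjSel bs (selOf bs N π) := by
  intro i j bi bj hi hj hne
  rw [Set.eq_empty_iff_forall_notMem]
  rintro a ⟨hai, haj⟩
  obtain ⟨b1, h1⟩ := vote_unique bs N hi hai
  obtain ⟨b2, h2⟩ := vote_unique bs N hj haj
  rw [h1] at h2
  exact hne (congrArg Prod.fst (Option.some.inj h2))

theorem out_root {σ : Agt → Option (RAct bs N)} {t : RSt bs N}
    (ht : t ∈ stdOut (RStd bs N t0 negs) none σ) :
    ∃ π, π ∈ stdAja (RStd bs N t0 negs) none Set.univ ∧ subJA σ π ∧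
      t = some ⟨selOf bs N π, t0 (selOf bs N π)⟩ := by
  obtain ⟨-, π, hπ, hsub, rfl⟩ := ht
  exact ⟨π, hπ, hsub, rfl⟩

theorem root_box
    (Hcm : ∀ sel : SelT bs, DisjSel bs sel → (∃ i b, sel i = some b) →
      ∀ i b, sel i = some b → ¬ satStd (N sel) (t0 sel) (thOf (bs.get i) b))
    (i : Fin bs.length) :
    ¬ satStd (RStd bs N t0 negs) none
      (FormCLI.cbox (bs.get i).1 (bs.get i).2.1 (bs.get i).2.2.1 (bs.get i).2.2.2) := by
  intro hsat
  replace hsat := satStd_cbox.mp hsat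
  classical
  set R := RStd bs N t0 negs with hR
  set A := (bs.get i).1 with hA
  set B := (bs.get i).2.1 with hB
  set σA : Agt → Option (RAct bs N) :=
    fun a => if a ∈ A then some (Sum.inl (some (i, false))) else none with hσAdef
  have hσA : σA ∈ stdAja R none A := by
    constructor
    · intro a; by_cases h : a ∈ A <;> simp [hσAdef, h]
    · intro a α h
      by_cases hm : a ∈ A
      · simp only [hσAdef, if_pos hm, Option.some.injEq] at h
        rw [← h]
        exact Set.mem_range_self _
      · simp [hσAdef, if_neg hm] at h
  -- votes forced by extensions of σA
  have hforce1 : ∀ π, subJA σA π → ∀ a ∈ A, vOf bs N π a = some (i, false) := by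
    intro π hsub a ha
    have : π a = some (Sum.inl (some (i, false))) := hsub a _ (by simp [hσAdef, if_pos ha])
    simp [vOf, this]
  rcases hsat σA hσA with ⟨t, ht, hφ⟩ | h2
  · obtain ⟨π, hπ, hsub, rfl⟩ := out_root bs N t0 negs ht
    set sel := selOf bs N π with hsel
    obtain ⟨b, hb⟩ := selOf_some_of_cond1 bs N (hforce1 π hsub)
    have hnsat := Hcm sel (selOf_disj bs N π) ⟨i, b, hb⟩ i b hb
    have htr := emb_sat (rootEmb bs N t0 negs sel) (bs.get i).2.2.1 (t0 sel)
    have hφ' : satStd (N sel) (t0 sel) (bs.get i).2.2.1 := htr.mp hφ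
    apply hnsat
    cases b with
    | false => exact hφ'
    | true => exact Or.inl hφ'
  · set σB : Agt → Option (RAct bs N) :=
      fun a => if a ∈ B then some (Sum.inl (some (i, true))) else none with hσBdef
    have hσB : σB ∈ stdAja R none B := by
      constructor
      · intro a; by_cases h : a ∈ B <;> simp [hσBdef, h]
      · intro a α h
        by_cases hm : a ∈ B
        · simp only [hσBdef, if_pos hm, Option.some.injEq] at h
          rw [← h]
          exact Set.mem_range_self _
        · simp [hσBdef, if_neg hm] at h
    obtain ⟨t, ht, hψ⟩ := h2 σB hσB
    obtain ⟨π, hπ, hsub, rfl⟩ := out_root bs N t0 negs ht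
    set sel := selOf bs N π with hsel
    have hsubA : subJA σA π := by
      intro a x hx
      apply hsub
      simp only [hσAdef] at hx
      by_cases hm : a ∈ A
      · rw [if_pos hm] at hx
        simp only [uplusJA, if_pos hm, hσAdef, if_pos hm]
        exact hx
      · rw [if_neg hm] at hx; cases hx
    have hc1 := hforce1 π hsubA
    have hc2 : ∀ a ∈ (bs.get i).2.1 \ (bs.get i).1, vOf bs N π a = some (i, true) := by
      rintro a ⟨haB, haA⟩
      have : π a = some (Sum.inl (some (i, true))) := by
        apply hsub
        simp only [uplusJA, hσAdef, hσBdef, ← hA, ← hB, if_neg haA, if_pos haB,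
          if_neg (show a ∉ A from haA), if_pos (show a ∈ B from haB)]
      simp [vOf, this]
    have hb := selOf_true_of bs N hc1 hc2
    have hnsat := Hcm sel (selOf_disj bs N π) ⟨i, true, hb⟩ i true hb
    have htr := emb_sat (rootEmb bs N t0 negs sel) (bs.get i).2.2.2 (t0 sel)
    exact hnsat (Or.inr (htr.mp hψ))

theorem root_lab : (RStd bs N t0 negs).lab none = negs := rfl

end Root

end CCSRProof
namespace CCSRProof

variable {Agt AP : Type}

theorem pairwise_filterMap' {α β : Type*} {R : α → α → Prop} {S : β → β → Prop}
    (f : α → Option β) {l : List α} (h : l.Pairwise R)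
    (hrs : ∀ a a', R a a' → ∀ b b', f a = some b → f a' = some b' → S b b') :
    (l.filterMap f).Pairwise S := by
  induction l with
  | nil => simp
  | cons x t ih =>
      rw [List.pairwise_cons] at h
      rw [List.filterMap_cons]
      cases hf : f x with
      | none => exact ih h.2
      | some b =>
          refine List.Pairwise.cons ?_ (ih h.2)
          intro b' hb'
          obtain ⟨a, ha, hfa⟩ := List.mem_filterMap.mp hb'
          exact hrs x a (h.1 a ha) b b' hf hfa

def trivStd (Agt AP : Type) : Std Agt AP where
  St := Unit
  Act := Unit
  st_ne := ⟨()⟩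
  act_ne := ⟨()⟩
  avail _ _ := Set.univ
  avail_ne _ _ := ⟨(), trivial⟩
  nxt _ _ := ()
  lab _ := ∅

def boxOf : FormCLI Agt AP → Option (BoxT Agt AP)
  | FormCLI.cbox A B φ ψ => some (A, B, φ, ψ)
  | _ => none

theorem boxOf_eq_some {ℓ : FormCLI Agt AP} {x : BoxT Agt AP} (h : boxOf ℓ = some x) :
    ℓ = FormCLI.cbox x.1 x.2.1 x.2.2.1 x.2.2.2 := by
  cases ℓ <;> simp [boxOf] at h
  rw [← h]

theorem key [Nonempty Agt] (c : List (FormCLI Agt AP)) (hs : ∀ ℓ ∈ c, Simple ℓ)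
    (hnt : ¬ ∃ p, FormCLI.atom p ∈ c ∧ FormCLI.natom p ∈ c)
    (hv : validCLI (bigOrCLI c)) :
    ∃ l : List (BoxT Agt AP × Bool), l ≠ [] ∧
      (∀ x ∈ l, FormCLI.cbox x.1.1 x.1.2.1 x.1.2.2.1 x.1.2.2.2 ∈ c) ∧
      List.Pairwise (fun x y => coalOf x.1 x.2 ∩ coalOf y.1 y.2 = ∅) l ∧
      validCLI (bigOrCLI (l.map (fun x => thOf x.1 x.2))) := by
  classical
  by_contra hK
  have H : ∀ l : List (BoxT Agt AP × Bool), l ≠ [] →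
      (∀ x ∈ l, FormCLI.cbox x.1.1 x.1.2.1 x.1.2.2.1 x.1.2.2.2 ∈ c) →
      List.Pairwise (fun x y => coalOf x.1 x.2 ∩ coalOf y.1 y.2 = ∅) l →
      ¬ validCLI (bigOrCLI (l.map (fun x => thOf x.1 x.2))) := by
    intro l h1 h2 h3 h4
    exact hK ⟨l, h1, h2, h3, h4⟩
  set bs : List (BoxT Agt AP) := c.filterMap boxOf with hbs
  set lsel : SelT bs → List (BoxT Agt AP × Bool) := fun sel =>
    (List.finRange bs.length).filterMap
      (fun i => (sel i).map (fun b => (bs.get i, b))) with hlsel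
  have F1 : ∀ sel x, x ∈ lsel sel ↔ ∃ i b, sel i = some b ∧ x = (bs.get i, b) := by
    intro sel x
    rw [hlsel]
    simp only [List.mem_filterMap, List.mem_finRange, true_and, Option.map_eq_some_iff]
    constructor
    · rintro ⟨i, b, hb, rfl⟩
      exact ⟨i, b, hb, rfl⟩
    · rintro ⟨i, b, hb, rfl⟩
      exact ⟨i, b, hb, rfl⟩
  have F2 : ∀ sel, ∀ x ∈ lsel sel,
      FormCLI.cbox x.1.1 x.1.2.1 x.1.2.2.1 x.1.2.2.2 ∈ c := by
    intro sel x hx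
    obtain ⟨i, b, hb, rfl⟩ := (F1 sel x).mp hx
    have hmem : bs.get i ∈ List.filterMap boxOf c := bs.get_mem _
    obtain ⟨ℓ, hl, hℓ⟩ := List.mem_filterMap.mp hmem
    have heq := boxOf_eq_some hℓ
    show FormCLI.cbox (bs.get i).1 (bs.get i).2.1 (bs.get i).2.2.1 (bs.get i).2.2.2 ∈ c
    rw [← heq]
    exact hl
  have F3 : ∀ sel, DisjSel bs sel →
      List.Pairwise (fun x y => coalOf x.1 x.2 ∩ coalOf y.1 y.2 = ∅) (lsel sel) := by
    intro sel hd
    rw [hlsel]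
    refine pairwise_filterMap' _ (List.nodup_finRange bs.length) ?_
    rintro i j hne x y hx hy
    rw [Option.map_eq_some_iff] at hx hy
    obtain ⟨bi, hbi, rfl⟩ := hx
    obtain ⟨bj, hbj, rfl⟩ := hy
    exact hd i j bi bj hbi hbj hne
  have pick : ∀ sel : SelT bs, ∃ P : (S : Std Agt AP) × S.St,
      DisjSel bs sel → (∃ i b, sel i = some b) →
        ∀ i b, sel i = some b → ¬ satStd P.1 P.2 (thOf (bs.get i) b) := by
    intro sel
    by_cases h : DisjSel bs sel ∧ ∃ i b, sel i = some b
    · obtain ⟨hd, i0, b0, hb0⟩ := h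
      have hne : lsel sel ≠ [] :=
        List.ne_nil_of_mem ((F1 sel _).mpr ⟨i0, b0, hb0, rfl⟩)
      have hninval := H (lsel sel) hne (F2 sel) (F3 sel hd)
      rw [validCLI] at hninval
      push_neg at hninval
      obtain ⟨M, s, hns⟩ := hninval
      refine ⟨⟨M.toStd, s⟩, fun _ _ i b hb hsat => ?_⟩
      apply hns
      rw [sat_bigOr]
      refine ⟨thOf (bs.get i) b, ?_, ?_⟩
      · exact List.mem_map.mpr ⟨(bs.get i, b), (F1 sel _).mpr ⟨i, b, hb, rfl⟩, rfl⟩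
      · exact (toStd_sat M (thOf (bs.get i) b) s).mp hsat
    · exact ⟨⟨trivStd Agt AP, ()⟩, fun hd hg => absurd ⟨hd, hg⟩ h⟩
  choose P hP using pick
  set N : SelT bs → Std Agt AP := fun sel => (P sel).1 with hN
  set t0 : ∀ sel : SelT bs, (N sel).St := fun sel => (P sel).2 with ht0
  set negs : Set AP := {p | FormCLI.natom p ∈ c} with hnegs
  have Hcm : ∀ sel : SelT bs, DisjSel bs sel → (∃ i b, sel i = some b) →
      ∀ i b, sel i = some b → ¬ satStd (N sel) (t0 sel) (thOf (bs.get i) b) := hP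
  have hsat := hv (Std.toCGM (RStd bs N t0 negs)) none
  replace hsat := (sat_bigOr _ _ _).mp hsat
  obtain ⟨ℓ, hl, hsatl⟩ := hsat
  rcases hs ℓ hl with ⟨p⟩ | ⟨p⟩ | ⟨A, B, φ, ψ⟩
  · have hp : p ∈ negs := hsatl
    exact hnt ⟨p, hl, hp⟩
  · have hp : p ∈ negs := hl
    exact (hsatl : p ∉ negs) hp
  · have hmem : (A, B, φ, ψ) ∈ bs := by
      rw [hbs]
      exact List.mem_filterMap.mpr ⟨_, hl, rfl⟩
    obtain ⟨i, hi⟩ := List.mem_iff_get.mp hmem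
    have hnb := root_box bs N t0 negs Hcm i
    rw [hi] at hnb
    exact hnb hsatl
end CCSRProof
namespace CCSRProof

variable {Agt AP : Type}

abbrev WitT (Agt AP : Type) := BoxT Agt AP × Bool

def box0 (x : WitT Agt AP) : FormCLI Agt AP :=
  FormCLI.cbox (coalOf x.1 x.2) ∅ (thOf x.1 x.2) FormCLI.bot

def boxOrig (x : WitT Agt AP) : FormCLI Agt AP :=
  FormCLI.cbox x.1.1 x.1.2.1 x.1.2.2.1 x.1.2.2.2

def U2 : WitT Agt AP → List (WitT Agt AP) → Set Agt
  | x, [] => coalOf x.1 x.2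
  | x, y :: t => coalOf x.1 x.2 ∪ U2 y t

def O2 : WitT Agt AP → List (WitT Agt AP) → FormCLI Agt AP
  | x, [] => thOf x.1 x.2
  | x, y :: t => FormCLI.or (thOf x.1 x.2) (O2 y t)

theorem eval_O2 (v : AP → Prop) (w : FormCLI Agt AP → Prop) :
    ∀ (t : List (WitT Agt AP)) (x : WitT Agt AP),
      evalCLI v w (O2 x t) ↔
        evalCLI v w (thOf x.1 x.2) ∨ ∃ y ∈ t, evalCLI v w (thOf y.1 y.2) := by
  intro t
  induction t with
  | nil => intro x; simp [O2]
  | cons y t ih =>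
      intro x
      show evalCLI v w (thOf x.1 x.2) ∨ evalCLI v w (O2 y t) ↔ _
      rw [ih y]
      simp only [List.mem_cons]
      constructor
      · rintro (h | h | ⟨z, hz, hez⟩)
        · exact Or.inl h
        · exact Or.inr ⟨y, Or.inl rfl, h⟩
        · exact Or.inr ⟨z, Or.inr hz, hez⟩
      · rintro (h | ⟨z, rfl | hz, hez⟩)
        · exact Or.inl h
        · exact Or.inr (Or.inl hez)
        · exact Or.inr (Or.inr ⟨z, hz, hez⟩)

theorem disj_U2 {x : WitT Agt AP} :
    ∀ {y : WitT Agt AP} {t : List (WitT Agt AP)},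
      (∀ z ∈ y :: t, coalOf x.1 x.2 ∩ coalOf z.1 z.2 = ∅) →
      coalOf x.1 x.2 ∩ U2 y t = ∅ := by
  intro y t
  induction t generalizing y with
  | nil => intro h; exact h y (by simp)
  | cons z t ih =>
      intro h
      show coalOf x.1 x.2 ∩ (coalOf y.1 y.2 ∪ U2 z t) = ∅
      rw [Set.inter_union_distrib_left, h y (by simp),
        ih (fun u hu => h u (by simp at hu ⊢; tauto)), Set.union_empty]

theorem der_split : ∀ (t : List (WitT Agt AP)) (x : WitT Agt AP) (χ : FormCLI Agt AP),
    List.Pairwise (fun x y => coalOf x.1 x.2 ∩ coalOf y.1 y.2 = ∅) (x :: t) →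
    DerCLI (FormCLI.or (FormCLI.cbox (U2 x t) ∅ (O2 x t) FormCLI.bot) χ) →
    DerCLI (FormCLI.or (bigOrCLI ((x :: t).map box0)) χ) := by
  intro t
  induction t with
  | nil =>
      intro x χ hpw h
      refine der_mono h ?_
      intro v w hh
      show (evalCLI v w (box0 x) ∨ evalCLI v w (bigOrCLI [])) ∨ evalCLI v w χ
      rcases (hh : evalCLI v w (FormCLI.cbox (U2 x []) ∅ (O2 x []) FormCLI.bot) ∨ evalCLI v w χ)
        with h1 | h1
      · exact Or.inl (Or.inl h1)
      · exact Or.inr h1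
  | cons y t ih =>
      intro x χ hpw h
      rw [List.pairwise_cons] at hpw
      have hdisj : coalOf x.1 x.2 ∩ U2 y t = ∅ := disj_U2 hpw.1
      have h3 := DerCLI.r3 (coalOf x.1 x.2) (U2 y t) (thOf x.1 x.2) (O2 y t) χ hdisj h
      have h4 : DerCLI (FormCLI.or (FormCLI.cbox (U2 y t) ∅ (O2 y t) FormCLI.bot)
          (FormCLI.or (box0 x) χ)) := by
        refine der_mono h3 ?_
        intro v w hh
        rcases (hh : evalCLI v w (box0 x) ∨
            (evalCLI v w (FormCLI.cbox (U2 y t) ∅ (O2 y t) FormCLI.bot) ∨ evalCLI v w χ))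
          with h1 | h1 | h1
        · exact Or.inr (Or.inl h1)
        · exact Or.inl h1
        · exact Or.inr (Or.inr h1)
      have h5 := ih y (FormCLI.or (box0 x) χ) hpw.2 h4
      refine der_mono h5 ?_
      intro v w hh
      show (evalCLI v w (box0 x) ∨ evalCLI v w (bigOrCLI ((y :: t).map box0))) ∨ evalCLI v w χ
      rcases (hh : evalCLI v w (bigOrCLI ((y :: t).map box0)) ∨
          (evalCLI v w (box0 x) ∨ evalCLI v w χ)) with h1 | h1 | h1
      · exact Or.inl (Or.inr h1)
      · exact Or.inl (Or.inl h1)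
      · exact Or.inr h1

theorem der_convert : ∀ (l : List (WitT Agt AP)) (χ : FormCLI Agt AP),
    DerCLI (FormCLI.or (bigOrCLI (l.map box0)) χ) →
    DerCLI (FormCLI.or (bigOrCLI (l.map boxOrig)) χ) := by
  intro l
  induction l with
  | nil => intro χ h; exact h
  | cons x t ih =>
      intro χ h
      have h1 : DerCLI (FormCLI.or (bigOrCLI (t.map box0)) (FormCLI.or (box0 x) χ)) := by
        refine der_mono h ?_
        intro v w hh
        rcases (hh : (evalCLI v w (box0 x) ∨ evalCLI v w (bigOrCLI (t.map box0))) ∨ evalCLI v w χ)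
          with (h1 | h1) | h1
        · exact Or.inr (Or.inl h1)
        · exact Or.inl h1
        · exact Or.inr (Or.inr h1)
      have h2 := ih _ h1
      have h3 : DerCLI (FormCLI.or (box0 x) (FormCLI.or (bigOrCLI (t.map boxOrig)) χ)) := by
        refine der_mono h2 ?_
        intro v w hh
        rcases (hh : evalCLI v w (bigOrCLI (t.map boxOrig)) ∨
            (evalCLI v w (box0 x) ∨ evalCLI v w χ)) with h1 | h1 | h1
        · exact Or.inr (Or.inl h1)
        · exact Or.inl h1
        · exact Or.inr (Or.inr h1)
      obtain ⟨⟨A, B, φ, ψ⟩, b⟩ := x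
      have h4 : DerCLI (FormCLI.or (boxOrig ((A, B, φ, ψ), b))
          (FormCLI.or (bigOrCLI (t.map boxOrig)) χ)) := by
        cases b with
        | false => exact DerCLI.r4 A B φ ψ _ h3
        | true => exact DerCLI.r5 A B φ ψ _ h3
      refine der_mono h4 ?_
      intro v w hh
      show (evalCLI v w (boxOrig ((A, B, φ, ψ), b)) ∨
        evalCLI v w (bigOrCLI (t.map boxOrig))) ∨ evalCLI v w χ
      rcases (hh : evalCLI v w (boxOrig ((A, B, φ, ψ), b)) ∨
          (evalCLI v w (bigOrCLI (t.map boxOrig)) ∨ evalCLI v w χ)) with h1 | h1 | h1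
      · exact Or.inl (Or.inl h1)
      · exact Or.inl (Or.inr h1)
      · exact Or.inr h1

theorem der_of_witness (c : List (FormCLI Agt AP)) (l : List (WitT Agt AP)) (hne : l ≠ [])
    (hin : ∀ x ∈ l, boxOrig x ∈ c)
    (hpw : List.Pairwise (fun x y => coalOf x.1 x.2 ∩ coalOf y.1 y.2 = ∅) l)
    (hder : DerCLI (bigOrCLI (l.map (fun x => thOf x.1 x.2)))) :
    DerCLI (bigOrCLI c) := by
  obtain ⟨x, t, rfl⟩ := List.exists_cons_of_ne_nil hne
  have h0 : DerCLI (O2 x t) := by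
    refine der_mono hder ?_
    intro v w hh
    rw [eval_bigOr] at hh
    obtain ⟨ℓ, hl, he⟩ := hh
    obtain ⟨z, hz, rfl⟩ := List.mem_map.mp hl
    rw [eval_O2]
    rcases List.mem_cons.mp hz with rfl | hz'
    · exact Or.inl he
    · exact Or.inr ⟨z, hz', he⟩
  have h1 := DerCLI.r2 (U2 x t) (O2 x t) h0
  have h2 : DerCLI (FormCLI.or (FormCLI.cbox (U2 x t) ∅ (O2 x t) FormCLI.bot) FormCLI.bot) :=
    der_mono h1 (fun v w hh => Or.inl hh)
  have h3 := der_split t x FormCLI.bot hpw h2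
  have h4 := der_convert (x :: t) FormCLI.bot h3
  refine der_mono h4 ?_
  intro v w hh
  rw [eval_bigOr]
  rcases (hh : evalCLI v w (bigOrCLI ((x :: t).map boxOrig)) ∨ False) with hh' | hbot
  · rw [eval_bigOr] at hh'
    obtain ⟨ℓ, hl, he⟩ := hh'
    obtain ⟨z, hz, rfl⟩ := List.mem_map.mp hl
    exact ⟨boxOrig z, hin z hz, he⟩
  · exact absurd hbot not_false

theorem main [Nonempty Agt] :
    ∀ n : ℕ, ∀ φ : FormCLI Agt AP, depth φ ≤ n → validCLI φ → DerCLI φ := by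
  intro n
  induction n using Nat.strong_induction_on with
  | _ n ih =>
    intro φ hd hv
    have hclause : ∀ c ∈ cnf φ, DerCLI (bigOrCLI c) := by
      intro c hc
      have hvc : validCLI (bigOrCLI c) := by
        intro M s
        have hφ := hv M s
        rw [sat_eval] at hφ
        rw [sat_bigOr]
        obtain ⟨ℓ, hl, he⟩ := (eval_cnf _ _ φ).mp hφ c hc
        exact ⟨ℓ, hl, (sat_eval M s ℓ).mpr he⟩
      by_cases htaut : ∃ p, FormCLI.atom p ∈ c ∧ FormCLI.natom p ∈ c
      · obtain ⟨p, h1, h2⟩ := htaut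
        apply der_taut
        intro v w
        rw [eval_bigOr]
        by_cases hp : v p
        · exact ⟨FormCLI.atom p, h1, hp⟩
        · exact ⟨FormCLI.natom p, h2, hp⟩
      · obtain ⟨l, hne, hin, hpw, hvl⟩ := key c (cnf_simple φ c hc) htaut hvc
        have hboxd : ∀ z ∈ l, max (depth z.1.2.2.1) (depth z.1.2.2.2) + 1 ≤ n := by
          intro z hz
          have hbox := cnf_depth φ c hc _ (hin z hz)
          have : depth (FormCLI.cbox z.1.1 z.1.2.1 z.1.2.2.1 z.1.2.2.2)
              = max (depth z.1.2.2.1) (depth z.1.2.2.2) + 1 := rfl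
          rw [this] at hbox
          exact le_trans hbox hd
        obtain ⟨x0, hx0⟩ := List.exists_mem_of_ne_nil l hne
        have hn1 : 1 ≤ n := le_trans (Nat.succ_le_succ (Nat.zero_le _)) (hboxd x0 hx0)
        have hdθ : ∀ z ∈ l, depth (thOf z.1 z.2) ≤ n - 1 := by
          intro z hz
          have hb := hboxd z hz
          cases hz2 : z.2 with
          | false =>
              show depth z.1.2.2.1 ≤ n - 1
              have := le_max_left (depth z.1.2.2.1) (depth z.1.2.2.2)
              omega
          | true =>
              show max (depth z.1.2.2.1) (depth z.1.2.2.2) ≤ n - 1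
              omega
        have hdbig : depth (bigOrCLI (l.map (fun x => thOf x.1 x.2))) ≤ n - 1 := by
          apply depth_bigOr
          intro ℓ hl
          obtain ⟨z, hz, rfl⟩ := List.mem_map.mp hl
          exact hdθ z hz
        have hder := ih (n - 1) (by omega) _ hdbig hvl
        exact der_of_witness c l hne hin hpw hder
    refine DerCLI.r1 ((cnf φ).map bigOrCLI) φ ?_ ?_
    · intro ψ hψ
      obtain ⟨c, hc, rfl⟩ := List.mem_map.mp hψ
      exact hclause c hc
    · intro v w hall
      rw [eval_cnf v w φ]
      intro c hc
      have := hall (bigOrCLI c) (List.mem_map_of_mem hc)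
      rwa [eval_bigOr] at this

end CCSRProof

/-- Completeness of CCSR_LI: every valid formula of Φ_CCSR_LI is derivable. -/
theorem completeness_CCSR_LI
    {Agt AP : Type} [Fintype Agt] [Nonempty Agt] [Countable AP]
    (φ : FormCLI Agt AP) (h : validCLI φ) : DerCLI φ :=
  CCSRProof.main (CCSRProof.depth φ) φ le_rfl h
end
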